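/- arXiv:math/0405587 — 13 statements merged into one kernel-verified Lean document; each statement's English description precedes it below -/
import Mathlib

section
/- Let R > 0, let μ_M be a Borel probability measure on [0,R], and let α₀ > 0. Then there exists a Borel probability measure μ on [0,R] such that ∫ t^k dμ(t) = α₀² ∫ t^{k−1} dμ_M(t) for every integer k ≥ 1 if and only if the function t ↦ 1/t is μ_M-integrable and α₀² ∫ (1/t) dμ_M(t) ≤ 1. Moreover, in that case μ is uniquely determined, namely μ(E) = α₀² ∫_E (1/t) dμ_M(t) + (1 − α₀² ∫ (1/t) dμ_M) δ₀(E) for all Borel E ⊆ [0,R], where δ₀ is the Dirac measure at 0; in particular, no such μ exists when μ_M({0}) > 0. -/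
/-!
If `μ` solves the moment problem, then the measures `t • μ` and `α₀² • μ_M` have the same moments
and both live on `[0, R]`, so by Weierstrass approximation they coincide. Dividing by `t` shows
that on `(0, ∞)` the measure `μ` is `α₀² t⁻¹ μ_M`; hence `α₀² ∫ 1/t dμ_M = μ (0, ∞) ≤ 1`, and the
rest of the unit mass of `μ` is an atom at `0`. Conversely, when `1/t` is `μ_M`-integrable with
`α₀² ∫ 1/t dμ_M ≤ 1`, this formula defines a probability measure with the required moments.
-/

open MeasureTheory Set Polynomial
open scoped ENNReal

section Moments

variable {μ ν : Measure ℝ} {a b : ℝ}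

theorem Continuous.integrable_of_measure_compl_Icc_eq_zero [IsFiniteMeasure μ] {f : ℝ → ℝ}
    (hf : Continuous f) (hμ : μ (Icc a b)ᶜ = 0) : Integrable f μ := by
  rw [← Measure.restrict_eq_self_of_ae_mem (mem_ae_iff.mpr hμ)]
  exact hf.continuousOn.integrableOn_compact isCompact_Icc

theorem integral_eval_eq_sum_moments [IsFiniteMeasure μ] (hμ : μ (Icc a b)ᶜ = 0) (p : ℝ[X]) :
    ∫ t, p.eval t ∂μ = ∑ n ∈ Finset.range (p.natDegree + 1), p.coeff n * ∫ t, t ^ n ∂μ := by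
  simp_rw [p.eval_eq_sum_range]
  rw [integral_finsetSum _ fun n _ =>
    ((continuous_pow n).integrable_of_measure_compl_Icc_eq_zero hμ).const_mul _]
  simp_rw [integral_const_mul]

theorem abs_integral_sub_integral_le [IsFiniteMeasure μ] (hμ : μ (Icc a b)ᶜ = 0) {f g : ℝ → ℝ}
    (hf : Continuous f) (hg : Continuous g) {ε : ℝ} (hfg : ∀ t ∈ Icc a b, |f t - g t| ≤ ε) :
    |∫ t, f t ∂μ - ∫ t, g t ∂μ| ≤ ε * μ.real univ := by
  rw [← integral_sub (hf.integrable_of_measure_compl_Icc_eq_zero hμ)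
    (hg.integrable_of_measure_compl_Icc_eq_zero hμ)]
  exact norm_integral_le_of_norm_le_const (f := fun t => f t - g t)
    (Filter.eventually_of_mem (mem_ae_iff.mpr hμ) hfg)

theorem integral_eq_of_forall_moment_eq [IsFiniteMeasure μ] [IsFiniteMeasure ν]
    (hμ : μ (Icc a b)ᶜ = 0) (hν : ν (Icc a b)ᶜ = 0)
    (hmom : ∀ n : ℕ, ∫ t, t ^ n ∂μ = ∫ t, t ^ n ∂ν) {f : ℝ → ℝ} (hf : Continuous f) :
    ∫ t, f t ∂μ = ∫ t, f t ∂ν := by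
  refine eq_of_forall_dist_le fun ε hε => ?_
  set C := μ.real univ + ν.real univ + 1
  obtain ⟨p, hp⟩ := exists_polynomial_near_of_continuousOn a b f hf.continuousOn (ε / C)
    (by positivity)
  have hfp : ∀ t ∈ Icc a b, |f t - p.eval t| ≤ ε / C := fun t ht => by
    rw [abs_sub_comm]
    exact (hp t ht).le
  have hpoly : ∫ t, p.eval t ∂μ = ∫ t, p.eval t ∂ν := by
    simp only [integral_eval_eq_sum_moments hμ, integral_eval_eq_sum_moments hν, hmom]
  calc dist (∫ t, f t ∂μ) (∫ t, f t ∂ν)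
      = |(∫ t, f t ∂μ - ∫ t, p.eval t ∂μ) - (∫ t, f t ∂ν - ∫ t, p.eval t ∂ν)| := by
        rw [Real.dist_eq, hpoly, sub_sub_sub_cancel_right]
    _ ≤ |∫ t, f t ∂μ - ∫ t, p.eval t ∂μ| + |∫ t, f t ∂ν - ∫ t, p.eval t ∂ν| := abs_sub _ _
    _ ≤ ε / C * μ.real univ + ε / C * ν.real univ :=
        add_le_add (abs_integral_sub_integral_le hμ hf p.continuous hfp)
          (abs_integral_sub_integral_le hν hf p.continuous hfp)
    _ ≤ ε := by
        rw [← mul_add, div_mul_eq_mul_div, div_le_iff₀ (by positivity)]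
        exact mul_le_mul_of_nonneg_left (by linarith) hε.le

theorem MeasureTheory.Measure.ext_of_forall_moment_eq [IsFiniteMeasure μ] [IsFiniteMeasure ν]
    (hμ : μ (Icc a b)ᶜ = 0) (hν : ν (Icc a b)ᶜ = 0)
    (hmom : ∀ n : ℕ, ∫ t, t ^ n ∂μ = ∫ t, t ^ n ∂ν) : μ = ν :=
  ext_of_forall_integral_eq_of_IsFiniteMeasure fun f =>
    integral_eq_of_forall_moment_eq hμ hν hmom f.continuous

end Moments

section Densities

variable {μ ν : Measure ℝ} {b : ℝ}

theorem ENNReal.ofReal_mul_inv_ofReal_eq_indicator (t : ℝ) :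
    ENNReal.ofReal t * (ENNReal.ofReal t)⁻¹ = (Ioi 0).indicator 1 t := by
  by_cases ht : 0 < t
  · rw [indicator_of_mem (show t ∈ Ioi 0 from ht), Pi.one_apply,
      ENNReal.mul_inv_cancel (ENNReal.ofReal_pos.2 ht).ne' ENNReal.ofReal_ne_top]
  · rw [indicator_of_notMem (show t ∉ Ioi 0 from ht), ENNReal.ofReal_of_nonpos (not_lt.1 ht),
      zero_mul]

theorem withDensity_inv_withDensity_ofReal (μ : Measure ℝ) :
    (μ.withDensity fun t => ENNReal.ofReal t).withDensity (fun t => (ENNReal.ofReal t)⁻¹) =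
      μ.restrict (Ioi 0) := by
  rw [← withDensity_mul μ (f := fun t => ENNReal.ofReal t) (g := fun t => (ENNReal.ofReal t)⁻¹)
      ENNReal.measurable_ofReal ENNReal.measurable_ofReal.inv,
    ← withDensity_indicator_one measurableSet_Ioi]
  exact congrArg μ.withDensity (funext ENNReal.ofReal_mul_inv_ofReal_eq_indicator)

theorem lintegral_inv_withDensity_ofReal (μ : Measure ℝ) :
    ∫⁻ t, (ENNReal.ofReal t)⁻¹ ∂μ.withDensity (fun t => ENNReal.ofReal t) = μ (Ioi 0) := by
  rw [← Measure.restrict_apply_univ, ← withDensity_inv_withDensity_ofReal,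
    withDensity_apply _ MeasurableSet.univ, Measure.restrict_univ]

theorem integral_pow_withDensity_ofReal (hμ : ∀ᵐ t ∂μ, 0 ≤ t) (n : ℕ) :
    ∫ t, t ^ n ∂μ.withDensity (fun t => ENNReal.ofReal t) = ∫ t, t ^ (n + 1) ∂μ := by
  rw [integral_withDensity_eq_integral_toReal_smul ENNReal.measurable_ofReal
    (ae_of_all _ fun _ => ENNReal.ofReal_lt_top)]
  refine integral_congr_ae (hμ.mono fun t ht => ?_)
  dsimp only
  rw [ENNReal.toReal_ofReal ht, smul_eq_mul, pow_succ']

theorem withDensity_ofReal_eq_smul_of_moments [IsFiniteMeasure μ] [IsFiniteMeasure ν]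
    (hμ : μ (Icc 0 b)ᶜ = 0) (hν : ν (Icc 0 b)ᶜ = 0) {c : ℝ} (hc : 0 ≤ c)
    (hmom : ∀ n : ℕ, ∫ t, t ^ (n + 1) ∂μ = c * ∫ t, t ^ n ∂ν) :
    μ.withDensity (fun t => ENNReal.ofReal t) = ENNReal.ofReal c • ν := by
  have hμ₀ : ∀ᵐ t ∂μ, 0 ≤ t := Filter.mem_of_superset (mem_ae_iff.2 hμ) fun _ ht => ht.1
  have : IsFiniteMeasure (μ.withDensity fun t => ENNReal.ofReal t) :=
    isFiniteMeasure_withDensity_ofReal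
      (continuous_id.integrable_of_measure_compl_Icc_eq_zero hμ).hasFiniteIntegral
  have := ν.smul_finite (ENNReal.ofReal_ne_top (r := c))
  refine Measure.ext_of_forall_moment_eq (a := 0) (b := b) ?_ ?_ fun n => ?_
  · rw [withDensity_apply _ measurableSet_Icc.compl, Measure.restrict_zero_set hμ,
      lintegral_zero_measure]
  · rw [Measure.smul_apply, hν, smul_zero]
  · rw [integral_pow_withDensity_ofReal hμ₀, hmom, integral_smul_measure,
      ENNReal.toReal_ofReal hc, smul_eq_mul]

theorem toReal_inv_ofReal_smul_pow_succ_ae_eq (hμ : ∀ᵐ t ∂μ, 0 < t) (n : ℕ) :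
    (fun t => (ENNReal.ofReal t)⁻¹.toReal • t ^ (n + 1)) =ᵐ[μ] fun t => t ^ n :=
  hμ.mono fun t ht => by
    dsimp only
    rw [ENNReal.toReal_inv, ENNReal.toReal_ofReal ht.le, smul_eq_mul, pow_succ',
      inv_mul_cancel_left₀ ht.ne']

theorem ae_inv_ofReal_lt_top (hμ : ∀ᵐ t ∂μ, 0 < t) : ∀ᵐ t ∂μ, (ENNReal.ofReal t)⁻¹ < ∞ :=
  hμ.mono fun _ ht => ENNReal.inv_lt_top.2 (ENNReal.ofReal_pos.2 ht)

theorem integral_pow_succ_withDensity_inv_ofReal (hμ : ∀ᵐ t ∂μ, 0 < t) (n : ℕ) :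
    ∫ t, t ^ (n + 1) ∂μ.withDensity (fun t => (ENNReal.ofReal t)⁻¹) = ∫ t, t ^ n ∂μ := by
  rw [integral_withDensity_eq_integral_toReal_smul (f := fun t => (ENNReal.ofReal t)⁻¹)
    ENNReal.measurable_ofReal.inv (ae_inv_ofReal_lt_top hμ)]
  exact integral_congr_ae (toReal_inv_ofReal_smul_pow_succ_ae_eq hμ n)

theorem integrable_pow_succ_withDensity_inv_ofReal (hμ : ∀ᵐ t ∂μ, 0 < t) {n : ℕ}
    (hn : Integrable (fun t => t ^ n) μ) :
    Integrable (fun t => t ^ (n + 1)) (μ.withDensity fun t => (ENNReal.ofReal t)⁻¹) := by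
  rw [integrable_withDensity_iff_integrable_smul' (f := fun t => (ENNReal.ofReal t)⁻¹)
    ENNReal.measurable_ofReal.inv (ae_inv_ofReal_lt_top hμ)]
  exact hn.congr (toReal_inv_ofReal_smul_pow_succ_ae_eq hμ n).symm

theorem lintegral_inv_ofReal_eq_top (hμ : μ {0} ≠ 0) : ∫⁻ t, (ENNReal.ofReal t)⁻¹ ∂μ = ∞ := by
  refine top_unique ?_
  calc ∞ = ∫⁻ t in {0}, (ENNReal.ofReal t)⁻¹ ∂μ := by
        rw [lintegral_singleton, ENNReal.ofReal_zero, ENNReal.inv_zero, ENNReal.top_mul hμ]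
    _ ≤ ∫⁻ t, (ENNReal.ofReal t)⁻¹ ∂μ := setLIntegral_le_lintegral _ _

end Densities

section BackwardExtension

variable {μ ν : Measure ℝ} {c : ℝ≥0∞} {b : ℝ}

theorem MeasureTheory.Measure.eq_restrict_Ioi_add_dirac (hμ : μ (Iio 0) = 0) :
    μ = μ.restrict (Ioi 0) + μ {0} • Measure.dirac 0 := by
  conv_lhs =>
    rw [← Measure.restrict_add_restrict_compl (μ := μ) (measurableSet_Ioi (a := (0 : ℝ)))]
  rw [compl_Ioi, ← Iio_union_right, Measure.restrict_union (by simp) (measurableSet_singleton 0),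
    Measure.restrict_eq_zero.2 hμ, zero_add, Measure.restrict_singleton]

theorem mul_lintegral_inv_ofReal_eq (h : μ.withDensity (fun t => ENNReal.ofReal t) = c • ν) :
    c * ∫⁻ t, (ENNReal.ofReal t)⁻¹ ∂ν = μ (Ioi 0) := by
  rw [← smul_eq_mul, ← lintegral_smul_measure, ← h, lintegral_inv_withDensity_ofReal]

/-- The subtraction is truncated, so this is a probability measure only when
`c * ∫⁻ t, (ENNReal.ofReal t)⁻¹ ∂ν ≤ 1`. -/
noncomputable def backwardExtension (c : ℝ≥0∞) (ν : Measure ℝ) : Measure ℝ :=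
  c • ν.withDensity (fun t => (ENNReal.ofReal t)⁻¹) +
    (1 - c * ∫⁻ t, (ENNReal.ofReal t)⁻¹ ∂ν) • Measure.dirac 0

theorem backwardExtension_apply {E : Set ℝ} (hE : MeasurableSet E) :
    backwardExtension c ν E = c * ∫⁻ t in E, (ENNReal.ofReal t)⁻¹ ∂ν +
      (1 - c * ∫⁻ t, (ENNReal.ofReal t)⁻¹ ∂ν) * Measure.dirac 0 E := by
  simp [backwardExtension, withDensity_apply _ hE]

theorem isProbabilityMeasure_backwardExtension (h : c * ∫⁻ t, (ENNReal.ofReal t)⁻¹ ∂ν ≤ 1) :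
    IsProbabilityMeasure (backwardExtension c ν) := by
  constructor
  rw [backwardExtension_apply MeasurableSet.univ, setLIntegral_univ,
    Measure.dirac_apply_of_mem (mem_univ 0), mul_one, add_tsub_cancel_of_le h]

theorem backwardExtension_compl_Icc (hb : 0 ≤ b) (hν : ν (Icc 0 b)ᶜ = 0) :
    backwardExtension c ν (Icc 0 b)ᶜ = 0 := by
  rw [backwardExtension_apply measurableSet_Icc.compl, Measure.restrict_zero_set hν]
  simp [hb]

theorem integral_pow_succ_backwardExtension [IsFiniteMeasure ν] (hc : c ≠ ∞)
    (hν : ν (Icc 0 b)ᶜ = 0) (hν₀ : ν {0} = 0) (n : ℕ) :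
    ∫ t, t ^ (n + 1) ∂backwardExtension c ν = c.toReal * ∫ t, t ^ n ∂ν := by
  have hpos : ∀ᵐ t ∂ν, 0 < t := by
    filter_upwards [mem_ae_iff.2 hν, measure_eq_zero_iff_ae_notMem.1 hν₀] with t ht ht₀
    exact lt_of_le_of_ne ht.1 (Ne.symm ht₀)
  have hint := integrable_pow_succ_withDensity_inv_ofReal hpos
    ((continuous_pow n).integrable_of_measure_compl_Icc_eq_zero hν)
  rw [backwardExtension, integral_add_measure (hint.smul_measure hc)
    ((integrable_dirac (by simp)).smul_measure (ENNReal.sub_ne_top ENNReal.one_ne_top)),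
    integral_smul_measure, integral_smul_measure, integral_dirac,
    integral_pow_succ_withDensity_inv_ofReal hpos]
  simp

theorem eq_backwardExtension [IsProbabilityMeasure μ] (hμ : μ (Iio 0) = 0)
    (h : μ.withDensity (fun t => ENNReal.ofReal t) = c • ν) : μ = backwardExtension c ν := by
  have hdensity : c • ν.withDensity (fun t => (ENNReal.ofReal t)⁻¹) = μ.restrict (Ioi 0) := by
    rw [← withDensity_smul_measure, ← h, withDensity_inv_withDensity_ofReal]
  have hatom : μ {0} = 1 - μ (Ioi 0) := by
    refine ENNReal.eq_sub_of_add_eq (measure_ne_top μ _) ?_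
    have := congrArg (· univ) (Measure.eq_restrict_Ioi_add_dirac hμ)
    simp only [measure_univ, Measure.coe_add, Measure.coe_smul, Pi.add_apply, Pi.smul_apply,
      Measure.restrict_apply_univ, smul_eq_mul, mul_one] at this
    rw [this, add_comm]
  rw [backwardExtension, hdensity, mul_lintegral_inv_ofReal_eq h, ← hatom]
  exact Measure.eq_restrict_Ioi_add_dirac hμ

end BackwardExtension

/-- The integral of `1/t` is the lower integral of `(ENNReal.ofReal t)⁻¹`, which is `∞` at
`t = 0`, so its finiteness is exactly `1/t ∈ L¹(μ_M)`. -/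
theorem stmt0 (R : ℝ) (hR : 0 < R) (μM : Measure ℝ) (hprobM : IsProbabilityMeasure μM)
    (hsuppM : μM (Set.Icc (0 : ℝ) R)ᶜ = 0) (α₀ : ℝ) (hα₀ : 0 < α₀) :
    ((∃ μ : Measure ℝ, IsProbabilityMeasure μ ∧ μ (Set.Icc (0 : ℝ) R)ᶜ = 0 ∧
        ∀ k : ℕ, 1 ≤ k → ∫ t, t ^ k ∂μ = α₀ ^ 2 * ∫ t, t ^ (k - 1) ∂μM) ↔
      ((∫⁻ t, (ENNReal.ofReal t)⁻¹ ∂μM) < ⊤ ∧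
        ENNReal.ofReal (α₀ ^ 2) * ∫⁻ t, (ENNReal.ofReal t)⁻¹ ∂μM ≤ 1)) ∧
    (∀ μ : Measure ℝ, IsProbabilityMeasure μ → μ (Set.Icc (0 : ℝ) R)ᶜ = 0 →
      (∀ k : ℕ, 1 ≤ k → ∫ t, t ^ k ∂μ = α₀ ^ 2 * ∫ t, t ^ (k - 1) ∂μM) →
      ∀ E : Set ℝ, MeasurableSet E →
        μ E = ENNReal.ofReal (α₀ ^ 2) * (∫⁻ t in E, (ENNReal.ofReal t)⁻¹ ∂μM) +
          (1 - ENNReal.ofReal (α₀ ^ 2) * ∫⁻ t, (ENNReal.ofReal t)⁻¹ ∂μM) *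
            Measure.dirac (0 : ℝ) E) ∧
    (0 < μM {0} →
      ¬ ∃ μ : Measure ℝ, IsProbabilityMeasure μ ∧ μ (Set.Icc (0 : ℝ) R)ᶜ = 0 ∧
        ∀ k : ℕ, 1 ≤ k → ∫ t, t ^ k ∂μ = α₀ ^ 2 * ∫ t, t ^ (k - 1) ∂μM) := by
  set c := ENNReal.ofReal (α₀ ^ 2)
  set I := ∫⁻ t, (ENNReal.ofReal t)⁻¹ ∂μM
  have hdensity : ∀ μ : Measure ℝ, IsProbabilityMeasure μ → μ (Icc 0 R)ᶜ = 0 →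
      (∀ k : ℕ, 1 ≤ k → ∫ t, t ^ k ∂μ = α₀ ^ 2 * ∫ t, t ^ (k - 1) ∂μM) →
      μ.withDensity (fun t => ENNReal.ofReal t) = c • μM := fun μ _ hμ hmom =>
    withDensity_ofReal_eq_smul_of_moments hμ hsuppM (sq_nonneg α₀) fun n =>
      hmom (n + 1) n.succ_pos
  have hnecessary : (∃ μ : Measure ℝ, IsProbabilityMeasure μ ∧ μ (Icc 0 R)ᶜ = 0 ∧
      ∀ k : ℕ, 1 ≤ k → ∫ t, t ^ k ∂μ = α₀ ^ 2 * ∫ t, t ^ (k - 1) ∂μM) → I < ∞ ∧ c * I ≤ 1 := by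
    rintro ⟨μ, hprob, hμ, hmom⟩
    have hle : c * I ≤ 1 := mul_lintegral_inv_ofReal_eq (hdensity μ hprob hμ hmom) ▸ prob_le_one
    exact ⟨ENNReal.lt_top_of_mul_ne_top_right (hle.trans_lt ENNReal.one_lt_top).ne
      (ENNReal.ofReal_pos.2 (by positivity)).ne', hle⟩
  refine ⟨⟨hnecessary, fun ⟨hI, hle⟩ => ?_⟩, fun μ hprob hμ hmom E hE => ?_,
    fun h₀ hex => (lintegral_inv_ofReal_eq_top h₀.ne').not_lt (hnecessary hex).1⟩
  · have hM₀ : μM {0} = 0 := by_contra fun h => hI.ne (lintegral_inv_ofReal_eq_top h)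
    refine ⟨backwardExtension c μM, isProbabilityMeasure_backwardExtension hle,
      backwardExtension_compl_Icc hR.le hsuppM, fun k hk => ?_⟩
    obtain ⟨n, rfl⟩ := Nat.exists_eq_add_of_le' hk
    rw [integral_pow_succ_backwardExtension ENNReal.ofReal_ne_top hsuppM hM₀,
      ENNReal.toReal_ofReal (sq_nonneg _), Nat.add_sub_cancel]
  · have hneg : μ (Iio 0) = 0 := measure_mono_null
      (fun t ht hmem => not_le.2 ht hmem.1 : Iio 0 ⊆ (Icc 0 R)ᶜ) hμ
    rw [← backwardExtension_apply hE, ← eq_backwardExtension hneg (hdensity μ hprob hμ hmom)]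
end

section
/- Let 0 < ξ₀ < ξ₁, 0 < η₀ < η₁, and let a, b > 0 satisfy a·η₀ = b·ξ₀. Suppose there exists a Borel probability measure μ on [0,∞)² such that ∬ s dμ = a², ∬ t dμ = b², ∬ s² dμ = a²ξ₁², ∬ s t dμ = a²η₀², ∬ t² dμ = b²η₁², ∬ s² t dμ = a²η₀²ξ₁², ∬ s t² dμ = a²η₀²η₁², and ∬ s² t² dμ = a²η₀²ξ₁²η₁². Then a ≤ s, where s := √( ξ₀²ξ₁²η₁² / (ξ₁²η₀² + ξ₀²η₁² − ξ₀²η₀²) ). -/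
/-!
Integrating the nonnegative polynomial `(ξ₁² - s)² (η₁² - t)²` against `μ` and expanding it in
the prescribed moments gives `0 ≤ ξ₁² η₁² (ξ₁² η₁² - a² η₁² - b² ξ₁² + a² η₀²)`. Eliminating `b`
through `b² ξ₀² = a² η₀²` turns the second factor into the bound `a² ≤ s²`.
-/

open MeasureTheory

section MixedMoments

variable {μ : Measure (ℝ × ℝ)} [IsProbabilityMeasure μ]

theorem integral_sub_sq_mul_sub_sq (x y : ℝ)
    (h10 : Integrable (fun p : ℝ × ℝ => p.1) μ) (h01 : Integrable (fun p : ℝ × ℝ => p.2) μ)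
    (h20 : Integrable (fun p : ℝ × ℝ => p.1 ^ 2) μ)
    (h11 : Integrable (fun p : ℝ × ℝ => p.1 * p.2) μ)
    (h02 : Integrable (fun p : ℝ × ℝ => p.2 ^ 2) μ)
    (h21 : Integrable (fun p : ℝ × ℝ => p.1 ^ 2 * p.2) μ)
    (h12 : Integrable (fun p : ℝ × ℝ => p.1 * p.2 ^ 2) μ)
    (h22 : Integrable (fun p : ℝ × ℝ => p.1 ^ 2 * p.2 ^ 2) μ) :
    ∫ p, (x - p.1) ^ 2 * (y - p.2) ^ 2 ∂μ =
      x ^ 2 * y ^ 2 - 2 * x * y ^ 2 * ∫ p, p.1 ∂μ - 2 * x ^ 2 * y * ∫ p, p.2 ∂μ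
        + y ^ 2 * ∫ p, p.1 ^ 2 ∂μ + 4 * x * y * ∫ p, p.1 * p.2 ∂μ + x ^ 2 * ∫ p, p.2 ^ 2 ∂μ
        - 2 * y * ∫ p, p.1 ^ 2 * p.2 ∂μ - 2 * x * ∫ p, p.1 * p.2 ^ 2 ∂μ
        + ∫ p, p.1 ^ 2 * p.2 ^ 2 ∂μ := by
  have expand : (fun p : ℝ × ℝ => (x - p.1) ^ 2 * (y - p.2) ^ 2) = fun p =>
      x ^ 2 * y ^ 2 - 2 * x * y ^ 2 * p.1 - 2 * x ^ 2 * y * p.2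
        + y ^ 2 * p.1 ^ 2 + 4 * x * y * (p.1 * p.2) + x ^ 2 * p.2 ^ 2
        - 2 * y * (p.1 ^ 2 * p.2) - 2 * x * (p.1 * p.2 ^ 2) + p.1 ^ 2 * p.2 ^ 2 := by
    funext p; ring
  rw [expand, integral_add, integral_sub, integral_sub, integral_add, integral_add, integral_add,
    integral_sub, integral_sub]
  · simp only [integral_const, integral_const_mul, probReal_univ, one_smul]
  all_goals fun_prop

end MixedMoments

theorem stmt2_general (ξ₀ ξ₁ η₀ η₁ a b : ℝ)
    (hξ₀ : 0 < ξ₀) (hξ : ξ₀ < ξ₁) (hη₀ : 0 < η₀) (hη : η₀ < η₁)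
    (ha : 0 < a) (hb : 0 < b) (hcomm : a * η₀ = b * ξ₀)
    (μ : Measure (ℝ × ℝ)) (hprob : IsProbabilityMeasure μ)
    (m10 : ∫ p, p.1 ∂μ = a ^ 2)
    (m01 : ∫ p, p.2 ∂μ = b ^ 2)
    (m20 : ∫ p, p.1 ^ 2 ∂μ = a ^ 2 * ξ₁ ^ 2)
    (m11 : ∫ p, p.1 * p.2 ∂μ = a ^ 2 * η₀ ^ 2)
    (m02 : ∫ p, p.2 ^ 2 ∂μ = b ^ 2 * η₁ ^ 2)
    (m21 : ∫ p, p.1 ^ 2 * p.2 ∂μ = a ^ 2 * η₀ ^ 2 * ξ₁ ^ 2)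
    (m12 : ∫ p, p.1 * p.2 ^ 2 ∂μ = a ^ 2 * η₀ ^ 2 * η₁ ^ 2)
    (m22 : ∫ p, p.1 ^ 2 * p.2 ^ 2 ∂μ = a ^ 2 * η₀ ^ 2 * ξ₁ ^ 2 * η₁ ^ 2) :
    a ≤ Real.sqrt (ξ₀ ^ 2 * ξ₁ ^ 2 * η₁ ^ 2 /
      (ξ₁ ^ 2 * η₀ ^ 2 + ξ₀ ^ 2 * η₁ ^ 2 - ξ₀ ^ 2 * η₀ ^ 2)) := by
  have hξ₁ : 0 < ξ₁ := hξ₀.trans hξ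
  have hη₁ : 0 < η₁ := hη₀.trans hη
  have integrable_of_eq {f : ℝ × ℝ → ℝ} {c : ℝ} (hc : 0 < c) (h : ∫ p, f p ∂μ = c) :
      Integrable f μ :=
    .of_integral_ne_zero (h ▸ hc.ne')
  have hexpand := integral_sub_sq_mul_sub_sq (μ := μ) (ξ₁ ^ 2) (η₁ ^ 2)
    (integrable_of_eq (by positivity) m10) (integrable_of_eq (by positivity) m01)
    (integrable_of_eq (by positivity) m20) (integrable_of_eq (by positivity) m11)
    (integrable_of_eq (by positivity) m02) (integrable_of_eq (by positivity) m21)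
    (integrable_of_eq (by positivity) m12) (integrable_of_eq (by positivity) m22)
  rw [m10, m01, m20, m11, m02, m21, m12, m22] at hexpand
  have hE : 0 ≤ ξ₁ ^ 2 * η₁ ^ 2 - a ^ 2 * η₁ ^ 2 - b ^ 2 * ξ₁ ^ 2 + a ^ 2 * η₀ ^ 2 := by
    refine (mul_nonneg_iff_of_pos_left (c := ξ₁ ^ 2 * η₁ ^ 2) (by positivity)).1 ?_
    calc 0 ≤ ∫ p, (ξ₁ ^ 2 - p.1) ^ 2 * (η₁ ^ 2 - p.2) ^ 2 ∂μ :=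
          integral_nonneg fun p => by positivity
      _ = _ := by rw [hexpand]; ring
  have hb2 : b ^ 2 * ξ₀ ^ 2 = a ^ 2 * η₀ ^ 2 := by linear_combination -(a * η₀ + b * ξ₀) * hcomm
  have hD : 0 < ξ₁ ^ 2 * η₀ ^ 2 + ξ₀ ^ 2 * η₁ ^ 2 - ξ₀ ^ 2 * η₀ ^ 2 := by
    have : ξ₀ ^ 2 < ξ₁ ^ 2 := by gcongr
    linarith [mul_lt_mul_of_pos_left this (pow_pos hη₀ 2), mul_pos (pow_pos hξ₀ 2) (pow_pos hη₁ 2)]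
  rw [Real.le_sqrt' ha, le_div_iff₀ hD]
  linear_combination ξ₀ ^ 2 * hE - ξ₁ ^ 2 * hb2

/-- Necessary condition `a ≤ s` for subnormality of the first family of
2-variable weighted shifts, via the moments of a representing measure. -/
theorem stmt2 (ξ₀ ξ₁ η₀ η₁ a b : ℝ)
    (hξ₀ : 0 < ξ₀) (hξ : ξ₀ < ξ₁) (hη₀ : 0 < η₀) (hη : η₀ < η₁)
    (ha : 0 < a) (hb : 0 < b) (hcomm : a * η₀ = b * ξ₀)
    (μ : Measure (ℝ × ℝ)) (hprob : IsProbabilityMeasure μ)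
    (hsupp : μ (Set.Ici (0 : ℝ) ×ˢ Set.Ici (0 : ℝ))ᶜ = 0)
    (m10 : ∫ p, p.1 ∂μ = a ^ 2)
    (m01 : ∫ p, p.2 ∂μ = b ^ 2)
    (m20 : ∫ p, p.1 ^ 2 ∂μ = a ^ 2 * ξ₁ ^ 2)
    (m11 : ∫ p, p.1 * p.2 ∂μ = a ^ 2 * η₀ ^ 2)
    (m02 : ∫ p, p.2 ^ 2 ∂μ = b ^ 2 * η₁ ^ 2)
    (m21 : ∫ p, p.1 ^ 2 * p.2 ∂μ = a ^ 2 * η₀ ^ 2 * ξ₁ ^ 2)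
    (m12 : ∫ p, p.1 * p.2 ^ 2 ∂μ = a ^ 2 * η₀ ^ 2 * η₁ ^ 2)
    (m22 : ∫ p, p.1 ^ 2 * p.2 ^ 2 ∂μ = a ^ 2 * η₀ ^ 2 * ξ₁ ^ 2 * η₁ ^ 2) :
    a ≤ Real.sqrt (ξ₀ ^ 2 * ξ₁ ^ 2 * η₁ ^ 2 /
      (ξ₁ ^ 2 * η₀ ^ 2 + ξ₀ ^ 2 * η₁ ^ 2 - ξ₀ ^ 2 * η₀ ^ 2)) :=
  stmt2_general ξ₀ ξ₁ η₀ η₁ a b hξ₀ hξ hη₀ hη ha hb hcomm μ hprob m10 m01 m20 m11 m02 m21 m12 m22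
end

section
/- Let {ξ_k}_{k≥0} and {η_k}_{k≥0} be strictly increasing sequences of positive real numbers, and let a, b > 0 satisfy a·η₀ = b·ξ₀. Define weights α(k) := ξ_{k₁} if k₁ ≥ 1 or k₂ ≥ 1, α(0,0) := a; β(k) := η_{k₂} if k₁ ≥ 1 or k₂ ≥ 1, β(0,0) := b. Then the six-point-test matrix M(k) is positive semidefinite for every k ∈ ℤ₊² if and only if a ≤ h, where h := ξ₀ √( (ξ₁²η₁² − ξ₀²η₀²) / (ξ₀²η₁² + ξ₁²η₀² − 2ξ₀²η₀²) ). -/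
/-- The 2×2 matrix of the Six-point Test at base point `k` for a 2-variable
weighted shift with weight families `α`, `β`. -/
def sixPointMatrix (α β : ℕ × ℕ → ℝ) (k : ℕ × ℕ) : Matrix (Fin 2) (Fin 2) ℝ :=
  !![α (k.1 + 1, k.2) ^ 2 - α k ^ 2,
     α (k.1, k.2 + 1) * β (k.1 + 1, k.2) - α k * β k;
     α (k.1, k.2 + 1) * β (k.1 + 1, k.2) - α k * β k,
     β (k.1, k.2 + 1) ^ 2 - β k ^ 2]

/-!
Off the origin `α` depends only on `k₁` and `β` only on `k₂`, so `M(k)` is diagonal with entries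
`ξ_{k₁+1}² - ξ_{k₁}²` and `η_{k₂+1}² - η_{k₂}²`, nonnegative by monotonicity. At the origin,
substituting `b = a η₀ / ξ₀` turns `ξ₀² det M(0,0)` into `ξ₀² N - a² D`, where `h = ξ₀ √(N / D)`,
so the determinant condition is exactly `a ≤ h`. The diagonal entries of `M(0,0)` then come for
free, since `N / D` is at most both `ξ₁² / ξ₀²` and `η₁² / η₀²`.
-/

open Matrix

lemma Matrix.posSemidef_fin_two_iff {p q r : ℝ} :
    (!![p, q; q, r] : Matrix (Fin 2) (Fin 2) ℝ).PosSemidef ↔ 0 ≤ p ∧ 0 ≤ r ∧ q ^ 2 ≤ p * r := by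
  constructor
  · intro h
    have hdet := h.det_nonneg
    rw [det_fin_two_of] at hdet
    exact ⟨by simpa using h.diag_nonneg (i := 0), by simpa using h.diag_nonneg (i := 1),
      by linarith⟩
  · rintro ⟨hp, hr, hq⟩
    refine .of_dotProduct_mulVec_nonneg ?_ fun x => ?_
    · ext i j
      fin_cases i <;> fin_cases j <;> rfl
    simp only [dotProduct, mulVec, Fin.sum_univ_two, star_trivial, of_apply, cons_val', cons_val_zero,
      cons_val_one, empty_val', cons_val_fin_one]
    rcases hp.eq_or_lt with rfl | hp
    · obtain rfl : q = 0 := by nlinarith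
      nlinarith [mul_nonneg hr (sq_nonneg (x 1))]
    · nlinarith [sq_nonneg (p * x 0 + q * x 1), mul_nonneg (sub_nonneg.2 hq) (sq_nonneg (x 1))]

lemma le_mul_sqrt_div_iff {a c n d : ℝ} (ha : 0 < a) (hc : 0 < c) (hd : 0 < d) :
    a ≤ c * √(n / d) ↔ a ^ 2 * d ≤ c ^ 2 * n := by
  rw [← div_le_iff₀' hc, Real.le_sqrt' (div_pos ha hc), div_pow,
    div_le_div_iff₀ (pow_pos hc 2) hd, mul_comm n]

lemma posSemidef_fin_two_iff_le_mul_sqrt {x₀ x₁ y₀ y₁ a b : ℝ} (hx₀ : 0 < x₀) (hx : x₀ < x₁)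
    (hy₀ : 0 < y₀) (hy : y₀ < y₁) (ha : 0 < a) (hab : a * y₀ = b * x₀) :
    (!![x₁ ^ 2 - a ^ 2, x₀ * y₀ - a * b; x₀ * y₀ - a * b, y₁ ^ 2 - b ^ 2] :
        Matrix (Fin 2) (Fin 2) ℝ).PosSemidef ↔
      a ≤ x₀ * √((x₁ ^ 2 * y₁ ^ 2 - x₀ ^ 2 * y₀ ^ 2) /
        (x₀ ^ 2 * y₁ ^ 2 + x₁ ^ 2 * y₀ ^ 2 - 2 * x₀ ^ 2 * y₀ ^ 2)) := by
  set D := x₀ ^ 2 * y₁ ^ 2 + x₁ ^ 2 * y₀ ^ 2 - 2 * x₀ ^ 2 * y₀ ^ 2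
  set N := x₁ ^ 2 * y₁ ^ 2 - x₀ ^ 2 * y₀ ^ 2
  have hx2 : x₀ ^ 2 < x₁ ^ 2 := pow_lt_pow_left₀ hx hx₀.le two_ne_zero
  have hy2 : y₀ ^ 2 < y₁ ^ 2 := pow_lt_pow_left₀ hy hy₀.le two_ne_zero
  have hD : 0 < D := by
    have : D = x₀ ^ 2 * (y₁ ^ 2 - y₀ ^ 2) + y₀ ^ 2 * (x₁ ^ 2 - x₀ ^ 2) := by ring
    rw [this]
    have := sub_pos.2 hx2
    have := sub_pos.2 hy2
    positivity
  have hdet : x₀ ^ 2 * ((x₁ ^ 2 - a ^ 2) * (y₁ ^ 2 - b ^ 2) - (x₀ * y₀ - a * b) ^ 2) =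
      x₀ ^ 2 * N - a ^ 2 * D := by
    linear_combination ((x₁ ^ 2 - a ^ 2) * (b * x₀ + a * y₀) -
      a * (2 * x₀ ^ 2 * y₀ - a * b * x₀ - a ^ 2 * y₀)) * hab
  have hx₀2 : 0 < x₀ ^ 2 := by positivity
  rw [posSemidef_fin_two_iff, le_mul_sqrt_div_iff ha hx₀ hD]
  constructor
  · rintro ⟨-, -, h⟩
    nlinarith [mul_nonneg hx₀2.le (sub_nonneg.2 h)]
  · intro h
    have hN : x₀ ^ 2 * N ≤ x₁ ^ 2 * D := by
      nlinarith [sq_nonneg (y₀ * (x₁ ^ 2 - x₀ ^ 2))]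
    have hN' : y₀ ^ 2 * N ≤ y₁ ^ 2 * D := by
      nlinarith [sq_nonneg (x₀ * (y₁ ^ 2 - y₀ ^ 2))]
    have hb : x₀ ^ 2 * b ^ 2 = y₀ ^ 2 * a ^ 2 := by
      linear_combination -(b * x₀ + a * y₀) * hab
    refine ⟨?_, ?_, ?_⟩
    · exact sub_nonneg.2 (le_of_mul_le_mul_right (h.trans hN) hD)
    · refine sub_nonneg.2 (le_of_mul_le_mul_left ?_ (mul_pos hx₀2 hD))
      calc x₀ ^ 2 * D * b ^ 2 = y₀ ^ 2 * (a ^ 2 * D) := by linear_combination D * hb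
        _ ≤ y₀ ^ 2 * (x₀ ^ 2 * N) := by gcongr
        _ ≤ x₀ ^ 2 * D * y₁ ^ 2 := by nlinarith
    · exact le_of_mul_le_mul_left (by linarith) hx₀2

section Weights

variable {ξ η : ℕ → ℝ} {a b : ℝ} {α β : ℕ × ℕ → ℝ}

lemma sixPointMatrix_zero (hα : ∀ k : ℕ × ℕ, α k = if k = (0, 0) then a else ξ k.1)
    (hβ : ∀ k : ℕ × ℕ, β k = if k = (0, 0) then b else η k.2) :
    sixPointMatrix α β (0, 0) =
      !![ξ 1 ^ 2 - a ^ 2, ξ 0 * η 0 - a * b; ξ 0 * η 0 - a * b, η 1 ^ 2 - b ^ 2] := by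
  simp [sixPointMatrix, hα, hβ]

lemma sixPointMatrix_of_ne_zero (hα : ∀ k : ℕ × ℕ, α k = if k = (0, 0) then a else ξ k.1)
    (hβ : ∀ k : ℕ × ℕ, β k = if k = (0, 0) then b else η k.2) {k : ℕ × ℕ} (hk : k ≠ (0, 0)) :
    sixPointMatrix α β k =
      !![ξ (k.1 + 1) ^ 2 - ξ k.1 ^ 2, 0; 0, η (k.2 + 1) ^ 2 - η k.2 ^ 2] := by
  simp [sixPointMatrix, hα, hβ, hk]

lemma posSemidef_sixPointMatrix_of_ne_zero (hξ₀ : ∀ n, 0 ≤ ξ n) (hη₀ : ∀ n, 0 ≤ η n)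
    (hξ : Monotone ξ) (hη : Monotone η)
    (hα : ∀ k : ℕ × ℕ, α k = if k = (0, 0) then a else ξ k.1)
    (hβ : ∀ k : ℕ × ℕ, β k = if k = (0, 0) then b else η k.2) {k : ℕ × ℕ} (hk : k ≠ (0, 0)) :
    (sixPointMatrix α β k).PosSemidef := by
  have hp : 0 ≤ ξ (k.1 + 1) ^ 2 - ξ k.1 ^ 2 :=
    sub_nonneg.2 (pow_le_pow_left₀ (hξ₀ _) (hξ k.1.le_succ) 2)
  have hr : 0 ≤ η (k.2 + 1) ^ 2 - η k.2 ^ 2 :=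
    sub_nonneg.2 (pow_le_pow_left₀ (hη₀ _) (hη k.2.le_succ) 2)
  rw [sixPointMatrix_of_ne_zero hα hβ hk, Matrix.posSemidef_fin_two_iff]
  exact ⟨hp, hr, by simpa using mul_nonneg hp hr⟩

end Weights

theorem stmt3_general (ξ η : ℕ → ℝ) (hξpos : ∀ n, 0 < ξ n) (hηpos : ∀ n, 0 < η n)
    (hξmono : StrictMono ξ) (hηmono : StrictMono η)
    (a b : ℝ) (ha : 0 < a) (hcomm : a * η 0 = b * ξ 0)
    (α β : ℕ × ℕ → ℝ)
    (hα : ∀ k : ℕ × ℕ, α k = if k = (0, 0) then a else ξ k.1)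
    (hβ : ∀ k : ℕ × ℕ, β k = if k = (0, 0) then b else η k.2) :
    (∀ k : ℕ × ℕ, (sixPointMatrix α β k).PosSemidef) ↔
      a ≤ ξ 0 * Real.sqrt ((ξ 1 ^ 2 * η 1 ^ 2 - ξ 0 ^ 2 * η 0 ^ 2) /
        (ξ 0 ^ 2 * η 1 ^ 2 + ξ 1 ^ 2 * η 0 ^ 2 - 2 * ξ 0 ^ 2 * η 0 ^ 2)) := by
  have hrest : ∀ k ≠ (0, 0), (sixPointMatrix α β k).PosSemidef := fun k hk ↦
    posSemidef_sixPointMatrix_of_ne_zero (fun n ↦ (hξpos n).le) (fun n ↦ (hηpos n).le)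
      hξmono.monotone hηmono.monotone hα hβ hk
  have hall : (∀ k, (sixPointMatrix α β k).PosSemidef) ↔ (sixPointMatrix α β (0, 0)).PosSemidef :=
    ⟨fun h ↦ h (0, 0), fun h k ↦ if hk : k = (0, 0) then hk ▸ h else hrest k hk⟩
  rw [hall, sixPointMatrix_zero hα hβ]
  exact posSemidef_fin_two_iff_le_mul_sqrt (hξpos 0) (hξmono zero_lt_one) (hηpos 0)
    (hηmono zero_lt_one) ha hcomm

/-- Joint hyponormality of the first family of 2-variable weighted shifts is
equivalent to `a ≤ h`. -/
theorem stmt3 (ξ η : ℕ → ℝ) (hξpos : ∀ n, 0 < ξ n) (hηpos : ∀ n, 0 < η n)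
    (hξmono : StrictMono ξ) (hηmono : StrictMono η)
    (a b : ℝ) (ha : 0 < a) (hb : 0 < b) (hcomm : a * η 0 = b * ξ 0)
    (α β : ℕ × ℕ → ℝ)
    (hα : ∀ k : ℕ × ℕ, α k = if k = (0, 0) then a else ξ k.1)
    (hβ : ∀ k : ℕ × ℕ, β k = if k = (0, 0) then b else η k.2) :
    (∀ k : ℕ × ℕ, (sixPointMatrix α β k).PosSemidef) ↔
      a ≤ ξ 0 * Real.sqrt ((ξ 1 ^ 2 * η 1 ^ 2 - ξ 0 ^ 2 * η 0 ^ 2) /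
        (ξ 0 ^ 2 * η 1 ^ 2 + ξ 1 ^ 2 * η 0 ^ 2 - 2 * ξ 0 ^ 2 * η 0 ^ 2)) :=
  stmt3_general ξ η hξpos hηpos hξmono hηmono a b ha hcomm α β hα hβ
end

section
/- Let 0 < ξ₀ < ξ₁ and 0 < η₀ < η₁. Set s := √( ξ₀²ξ₁²η₁² / (ξ₁²η₀² + ξ₀²η₁² − ξ₀²η₀²) ) and h := ξ₀ √( (ξ₁²η₁² − ξ₀²η₀²) / (ξ₀²η₁² + ξ₁²η₀² − 2ξ₀²η₀²) ). Then h² − s² = ξ₀⁴η₀²(ξ₁² − ξ₀²)(η₁² − η₀²) / ( (ξ₀²η₁² + ξ₁²η₀² − 2ξ₀²η₀²)(ξ₁²η₀² + ξ₀²η₁² − ξ₀²η₀²) ) > 0; in particular s < h. -/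
/-!
Everything depends on `ξ₀, ξ₁, η₀, η₁` only through their squares `x < X` and `y < Y`, and
`h² − s²` is a difference of two rational functions of these. Over the common denominator the
numerator factors as `x² y (X − x)(Y − y)`, and both denominators are sums of positive terms,
`X y + x (Y − y)` and `x (Y − y) + (X − x) y`; so `h² > s²`, hence `h > s` as both are
nonnegative.
-/

section SquaredBounds

variable {x X y Y : ℝ}

lemma subnormal_denom_pos (hx : 0 < x) (hxX : x < X) (hy : 0 < y) (hyY : y < Y) :
    0 < X * y + x * Y - x * y := by
  nlinarith [mul_pos (hx.trans hxX) hy, mul_pos hx (sub_pos.2 hyY)]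

lemma hyponormal_denom_pos (hx : 0 < x) (hxX : x < X) (hy : 0 < y) (hyY : y < Y) :
    0 < x * Y + X * y - 2 * x * y := by
  nlinarith [mul_pos hx (sub_pos.2 hyY), mul_pos (sub_pos.2 hxX) hy]

lemma hyponormal_numer_pos (hx : 0 < x) (hxX : x < X) (hy : 0 < y) (hyY : y < Y) :
    0 < X * Y - x * y := by
  nlinarith [mul_pos hx (sub_pos.2 hyY), mul_pos (sub_pos.2 hxX) (hy.trans hyY)]

lemma hyponormal_sub_subnormal_eq (h₁ : x * Y + X * y - 2 * x * y ≠ 0)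
    (h₂ : X * y + x * Y - x * y ≠ 0) :
    x * ((X * Y - x * y) / (x * Y + X * y - 2 * x * y)) - x * X * Y / (X * y + x * Y - x * y) =
      x ^ 2 * y * (X - x) * (Y - y) /
        ((x * Y + X * y - 2 * x * y) * (X * y + x * Y - x * y)) := by
  rw [mul_div_assoc', div_sub_div _ _ h₁ h₂, div_left_inj' (mul_ne_zero h₁ h₂)]
  ring

end SquaredBounds

/-- The gap between the subnormality bound `s` and the hyponormality bound `h`:
`s < h`, via an explicit formula for `h² − s²`. -/
theorem stmt5 (ξ₀ ξ₁ η₀ η₁ s h : ℝ)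
    (hξ₀ : 0 < ξ₀) (hξ : ξ₀ < ξ₁) (hη₀ : 0 < η₀) (hη : η₀ < η₁)
    (hs : s = Real.sqrt (ξ₀ ^ 2 * ξ₁ ^ 2 * η₁ ^ 2 /
      (ξ₁ ^ 2 * η₀ ^ 2 + ξ₀ ^ 2 * η₁ ^ 2 - ξ₀ ^ 2 * η₀ ^ 2)))
    (hh : h = ξ₀ * Real.sqrt ((ξ₁ ^ 2 * η₁ ^ 2 - ξ₀ ^ 2 * η₀ ^ 2) /
      (ξ₀ ^ 2 * η₁ ^ 2 + ξ₁ ^ 2 * η₀ ^ 2 - 2 * ξ₀ ^ 2 * η₀ ^ 2))) :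
    h ^ 2 - s ^ 2 = ξ₀ ^ 4 * η₀ ^ 2 * (ξ₁ ^ 2 - ξ₀ ^ 2) * (η₁ ^ 2 - η₀ ^ 2) /
      ((ξ₀ ^ 2 * η₁ ^ 2 + ξ₁ ^ 2 * η₀ ^ 2 - 2 * ξ₀ ^ 2 * η₀ ^ 2) *
       (ξ₁ ^ 2 * η₀ ^ 2 + ξ₀ ^ 2 * η₁ ^ 2 - ξ₀ ^ 2 * η₀ ^ 2)) ∧
    0 < h ^ 2 - s ^ 2 ∧ s < h := by
  have hx : 0 < ξ₀ ^ 2 := by positivity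
  have hy : 0 < η₀ ^ 2 := by positivity
  have hxX : ξ₀ ^ 2 < ξ₁ ^ 2 := pow_lt_pow_left₀ hξ hξ₀.le two_ne_zero
  have hyY : η₀ ^ 2 < η₁ ^ 2 := pow_lt_pow_left₀ hη hη₀.le two_ne_zero
  have hd₁ := hyponormal_denom_pos hx hxX hy hyY
  have hd₂ := subnormal_denom_pos hx hxX hy hyY
  have hs2 : s ^ 2 = ξ₀ ^ 2 * ξ₁ ^ 2 * η₁ ^ 2 /
      (ξ₁ ^ 2 * η₀ ^ 2 + ξ₀ ^ 2 * η₁ ^ 2 - ξ₀ ^ 2 * η₀ ^ 2) := by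
    rw [hs, Real.sq_sqrt (by positivity)]
  have hh2 : h ^ 2 = ξ₀ ^ 2 * ((ξ₁ ^ 2 * η₁ ^ 2 - ξ₀ ^ 2 * η₀ ^ 2) /
      (ξ₀ ^ 2 * η₁ ^ 2 + ξ₁ ^ 2 * η₀ ^ 2 - 2 * ξ₀ ^ 2 * η₀ ^ 2)) := by
    rw [hh, mul_pow, Real.sq_sqrt (div_pos (hyponormal_numer_pos hx hxX hy hyY) hd₁).le]
  have gap := hyponormal_sub_subnormal_eq hd₁.ne' hd₂.ne'
  rw [← pow_mul] at gap
  have gap_pos : 0 < h ^ 2 - s ^ 2 := by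
    have := sub_pos.2 hxX
    have := sub_pos.2 hyY
    rw [hh2, hs2, gap]
    positivity
  refine ⟨by rw [hh2, hs2, gap], gap_pos, ?_⟩
  have hs0 : 0 ≤ s := hs ▸ Real.sqrt_nonneg _
  have hh0 : 0 ≤ h := hh ▸ mul_nonneg hξ₀.le (Real.sqrt_nonneg _)
  exact lt_of_pow_lt_pow_left₀ 2 hh0 (sub_pos.1 gap_pos)
end

section
/- Let 0 < ξ₀ < ξ₁, 0 < η_e < η₁, and 0 < η₀ < η₁. Set s := √( ξ₀²ξ₁²η₁² / (ξ₁²η₀² + ξ₀²η₁² − ξ₀²η₀²) ), s₂ := (ξ₀/η₀)·η_e, and u := ξ₀²η_e²η₁² / ( ξ₁²(η₁² − η_e²) + ξ₀²η_e² ). If η₀² < u, then s < s₂. -/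
/-!
Clearing denominators, the hypothesis `η₀² < u` and the conclusion `s² < s₂²` both become the
same polynomial inequality `ξ₁² η₁² η₀² < ηe² (ξ₁² η₀² + ξ₀² η₁² - ξ₀² η₀²)`; this is the
identity behind the paper's formula for `s₂² - s²`.
-/

lemma pos_of_lt_div_of_nonneg {a b x : ℝ} (ha : 0 ≤ a) (hx : 0 ≤ x) (h : x < a / b) : 0 < b := by
  by_contra! hb
  exact (hx.trans_lt h).not_ge (div_nonpos_of_nonneg_of_nonpos ha hb)

lemma sq_mul_sq_mul_sq_lt_of_sq_lt_div {ξ₀ ξ₁ ηe η₀ η₁ : ℝ}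
    (h : η₀ ^ 2 < ξ₀ ^ 2 * ηe ^ 2 * η₁ ^ 2 / (ξ₁ ^ 2 * (η₁ ^ 2 - ηe ^ 2) + ξ₀ ^ 2 * ηe ^ 2)) :
    ξ₁ ^ 2 * η₁ ^ 2 * η₀ ^ 2 < ηe ^ 2 * (ξ₁ ^ 2 * η₀ ^ 2 + ξ₀ ^ 2 * η₁ ^ 2 - ξ₀ ^ 2 * η₀ ^ 2) := by
  have hE := pos_of_lt_div_of_nonneg (by positivity) (by positivity) h
  rw [lt_div_iff₀ hE] at h
  linarith

lemma sqrt_div_lt_div_mul_of_sq_mul_sq_mul_sq_lt {ξ₀ ξ₁ ηe η₀ η₁ : ℝ}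
    (hξ₀ : 0 < ξ₀) (hηe : 0 < ηe) (hη₀ : 0 < η₀)
    (h : ξ₁ ^ 2 * η₁ ^ 2 * η₀ ^ 2 < ηe ^ 2 * (ξ₁ ^ 2 * η₀ ^ 2 + ξ₀ ^ 2 * η₁ ^ 2 - ξ₀ ^ 2 * η₀ ^ 2)) :
    Real.sqrt (ξ₀ ^ 2 * ξ₁ ^ 2 * η₁ ^ 2 / (ξ₁ ^ 2 * η₀ ^ 2 + ξ₀ ^ 2 * η₁ ^ 2 - ξ₀ ^ 2 * η₀ ^ 2))
      < ξ₀ / η₀ * ηe := by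
  have hD : 0 < ξ₁ ^ 2 * η₀ ^ 2 + ξ₀ ^ 2 * η₁ ^ 2 - ξ₀ ^ 2 * η₀ ^ 2 :=
    pos_of_mul_pos_right ((by positivity : (0 : ℝ) ≤ _).trans_lt h) (sq_nonneg ηe)
  rw [Real.sqrt_lt' (by positivity), div_mul_eq_mul_div, div_pow,
    div_lt_div_iff₀ hD (by positivity)]
  calc ξ₀ ^ 2 * ξ₁ ^ 2 * η₁ ^ 2 * η₀ ^ 2 = ξ₀ ^ 2 * (ξ₁ ^ 2 * η₁ ^ 2 * η₀ ^ 2) := by ring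
    _ < ξ₀ ^ 2 * (ηe ^ 2 * (ξ₁ ^ 2 * η₀ ^ 2 + ξ₀ ^ 2 * η₁ ^ 2 - ξ₀ ^ 2 * η₀ ^ 2)) := by gcongr
    _ = (ξ₀ * ηe) ^ 2 * (ξ₁ ^ 2 * η₀ ^ 2 + ξ₀ ^ 2 * η₁ ^ 2 - ξ₀ ^ 2 * η₀ ^ 2) := by ring

theorem stmt7_general (ξ₀ ξ₁ ηe η₀ η₁ s s₂ u : ℝ)
    (hξ₀ : 0 < ξ₀) (hηe₀ : 0 < ηe)
    (hη₀ : 0 < η₀)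
    (hs : s = Real.sqrt (ξ₀ ^ 2 * ξ₁ ^ 2 * η₁ ^ 2 /
      (ξ₁ ^ 2 * η₀ ^ 2 + ξ₀ ^ 2 * η₁ ^ 2 - ξ₀ ^ 2 * η₀ ^ 2)))
    (hs₂ : s₂ = (ξ₀ / η₀) * ηe)
    (hu : u = ξ₀ ^ 2 * ηe ^ 2 * η₁ ^ 2 /
      (ξ₁ ^ 2 * (η₁ ^ 2 - ηe ^ 2) + ξ₀ ^ 2 * ηe ^ 2))
    (hη₀u : η₀ ^ 2 < u) :
    s < s₂ := by
  subst hs hs₂ hu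
  exact sqrt_div_lt_div_mul_of_sq_mul_sq_mul_sq_lt hξ₀ hηe₀ hη₀
    (sq_mul_sq_mul_sq_lt_of_sq_lt_div hη₀u)

/-- Claim 5: if `η₀² < u` then `s < s₂`. -/
theorem stmt7 (ξ₀ ξ₁ ηe η₀ η₁ s s₂ u : ℝ)
    (hξ₀ : 0 < ξ₀) (hξ : ξ₀ < ξ₁) (hηe₀ : 0 < ηe) (hηe : ηe < η₁)
    (hη₀ : 0 < η₀) (hη : η₀ < η₁)
    (hs : s = Real.sqrt (ξ₀ ^ 2 * ξ₁ ^ 2 * η₁ ^ 2 /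
      (ξ₁ ^ 2 * η₀ ^ 2 + ξ₀ ^ 2 * η₁ ^ 2 - ξ₀ ^ 2 * η₀ ^ 2)))
    (hs₂ : s₂ = (ξ₀ / η₀) * ηe)
    (hu : u = ξ₀ ^ 2 * ηe ^ 2 * η₁ ^ 2 /
      (ξ₁ ^ 2 * (η₁ ^ 2 - ηe ^ 2) + ξ₀ ^ 2 * ηe ^ 2))
    (hη₀u : η₀ ^ 2 < u) :
    s < s₂ :=
  stmt7_general ξ₀ ξ₁ ηe η₀ η₁ s s₂ u hξ₀ hηe₀ hη₀ hs hs₂ hu hη₀u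
end

section
/- Let 0 < ξ₀ < ξ₁, 0 < η_e < η₁, and 0 < η₀ < η₁. Set h := ξ₀ √( (ξ₁²η₁² − ξ₀²η₀²) / (ξ₀²η₁² + ξ₁²η₀² − 2ξ₀²η₀²) ), s₂ := (ξ₀/η₀)·η_e, and v := ( ξ₁²(η₁² − η_e²) + 2ξ₀²η_e² − √( (η₁² − η_e²)( ξ₁⁴(η₁² − η_e²) + 4ξ₀²η_e²(ξ₁² − ξ₀²) ) ) ) / (2ξ₀²). Then the discriminant identity ( ξ₁²(η₁² − η_e²) + 2ξ₀²η_e² )² − 4ξ₀⁴η_e²η₁² = (η₁² − η_e²)( ξ₁⁴(η₁² − η_e²) + 4ξ₀²η_e²(ξ₁² − ξ₀²) ) > 0 holds, and if η₀² ≤ v then h ≤ s₂. -/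
set_option maxHeartbeats 1000000 in
/-- Claim 6: the discriminant identity, and if `η₀² ≤ v` then `h ≤ s₂`. -/
theorem stmt8 (ξ₀ ξ₁ ηe η₀ η₁ h s₂ v : ℝ)
    (hξ₀ : 0 < ξ₀) (hξ : ξ₀ < ξ₁) (hηe₀ : 0 < ηe) (hηe : ηe < η₁)
    (hη₀ : 0 < η₀) (hη : η₀ < η₁)
    (hh : h = ξ₀ * Real.sqrt ((ξ₁ ^ 2 * η₁ ^ 2 - ξ₀ ^ 2 * η₀ ^ 2) /
      (ξ₀ ^ 2 * η₁ ^ 2 + ξ₁ ^ 2 * η₀ ^ 2 - 2 * ξ₀ ^ 2 * η₀ ^ 2)))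
    (hs₂ : s₂ = (ξ₀ / η₀) * ηe)
    (hv : v = (ξ₁ ^ 2 * (η₁ ^ 2 - ηe ^ 2) + 2 * ξ₀ ^ 2 * ηe ^ 2 -
      Real.sqrt ((η₁ ^ 2 - ηe ^ 2) *
        (ξ₁ ^ 4 * (η₁ ^ 2 - ηe ^ 2) + 4 * ξ₀ ^ 2 * ηe ^ 2 * (ξ₁ ^ 2 - ξ₀ ^ 2)))) /
      (2 * ξ₀ ^ 2)) :
    (ξ₁ ^ 2 * (η₁ ^ 2 - ηe ^ 2) + 2 * ξ₀ ^ 2 * ηe ^ 2) ^ 2 - 4 * ξ₀ ^ 4 * ηe ^ 2 * η₁ ^ 2 =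
      (η₁ ^ 2 - ηe ^ 2) *
        (ξ₁ ^ 4 * (η₁ ^ 2 - ηe ^ 2) + 4 * ξ₀ ^ 2 * ηe ^ 2 * (ξ₁ ^ 2 - ξ₀ ^ 2)) ∧
    0 < (η₁ ^ 2 - ηe ^ 2) *
        (ξ₁ ^ 4 * (η₁ ^ 2 - ηe ^ 2) + 4 * ξ₀ ^ 2 * ηe ^ 2 * (ξ₁ ^ 2 - ξ₀ ^ 2)) ∧
    (η₀ ^ 2 ≤ v → h ≤ s₂) := by
  have hη1 : 0 < η₁ := hηe₀.trans hηe
  have h1 : (η₁:ℝ) ^ 2 - ηe ^ 2 > 0 := by nlinarith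
  have hξsq : (0:ℝ) < ξ₁ ^ 2 - ξ₀ ^ 2 := by nlinarith
  have h2 : ξ₁ ^ 4 * (η₁ ^ 2 - ηe ^ 2) + 4 * ξ₀ ^ 2 * ηe ^ 2 * (ξ₁ ^ 2 - ξ₀ ^ 2) > 0 := by
    have ha : 0 < ξ₁ ^ 4 * (η₁ ^ 2 - ηe ^ 2) :=
      mul_pos (pow_pos (hξ₀.trans hξ) 4) h1
    have hb : 0 < 4 * ξ₀ ^ 2 * ηe ^ 2 * (ξ₁ ^ 2 - ξ₀ ^ 2) := by positivity
    linarith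
  have hΔpos : 0 < (η₁ ^ 2 - ηe ^ 2) *
      (ξ₁ ^ 4 * (η₁ ^ 2 - ηe ^ 2) + 4 * ξ₀ ^ 2 * ηe ^ 2 * (ξ₁ ^ 2 - ξ₀ ^ 2)) :=
    mul_pos h1 h2
  refine ⟨by ring, hΔpos, fun hle => ?_⟩
  set Δ := (η₁ ^ 2 - ηe ^ 2) *
      (ξ₁ ^ 4 * (η₁ ^ 2 - ηe ^ 2) + 4 * ξ₀ ^ 2 * ηe ^ 2 * (ξ₁ ^ 2 - ξ₀ ^ 2)) with hΔ
  have hsq : Real.sqrt Δ ^ 2 = Δ := Real.sq_sqrt hΔpos.le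
  have hsnn : 0 ≤ Real.sqrt Δ := Real.sqrt_nonneg _
  -- from η₀² ≤ v : 2ξ₀²η₀² ≤ B − √Δ
  have hBle : 2 * ξ₀ ^ 2 * η₀ ^ 2 ≤
      ξ₁ ^ 2 * (η₁ ^ 2 - ηe ^ 2) + 2 * ξ₀ ^ 2 * ηe ^ 2 - Real.sqrt Δ := by
    have h2ξ : (0:ℝ) < 2 * ξ₀ ^ 2 := by positivity
    rw [hv, le_div_iff₀ h2ξ] at hle
    linarith
  -- q(η₀²) ≥ 0
  have hq : 0 ≤ ξ₀ ^ 2 * (η₀ ^ 2) ^ 2 -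
      (ξ₁ ^ 2 * (η₁ ^ 2 - ηe ^ 2) + 2 * ξ₀ ^ 2 * ηe ^ 2) * η₀ ^ 2 +
      ξ₀ ^ 2 * ηe ^ 2 * η₁ ^ 2 := by
    have hB2 : 0 ≤ ξ₁ ^ 2 * (η₁ ^ 2 - ηe ^ 2) + 2 * ξ₀ ^ 2 * ηe ^ 2 -
        2 * ξ₀ ^ 2 * η₀ ^ 2 - Real.sqrt Δ := by linarith
    have hB3 : 0 ≤ ξ₁ ^ 2 * (η₁ ^ 2 - ηe ^ 2) + 2 * ξ₀ ^ 2 * ηe ^ 2 -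
        2 * ξ₀ ^ 2 * η₀ ^ 2 + Real.sqrt Δ := by linarith
    have hP := mul_nonneg hB2 hB3
    have h4 : 0 ≤ (4 * ξ₀ ^ 2) * (ξ₀ ^ 2 * (η₀ ^ 2) ^ 2 -
        (ξ₁ ^ 2 * (η₁ ^ 2 - ηe ^ 2) + 2 * ξ₀ ^ 2 * ηe ^ 2) * η₀ ^ 2 +
        ξ₀ ^ 2 * ηe ^ 2 * η₁ ^ 2) := by nlinarith [hP, hsq]
    exact nonneg_of_mul_nonneg_right h4 (by positivity)
  have hD : 0 < ξ₀ ^ 2 * η₁ ^ 2 + ξ₁ ^ 2 * η₀ ^ 2 - 2 * ξ₀ ^ 2 * η₀ ^ 2 := by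
    have ha : 0 < ξ₀ ^ 2 * (η₁ ^ 2 - η₀ ^ 2) := by
      have : 0 < η₁ ^ 2 - η₀ ^ 2 := by nlinarith
      positivity
    have hb : 0 < η₀ ^ 2 * (ξ₁ ^ 2 - ξ₀ ^ 2) := by positivity
    nlinarith
  have hkey : (ξ₁ ^ 2 * η₁ ^ 2 - ξ₀ ^ 2 * η₀ ^ 2) /
      (ξ₀ ^ 2 * η₁ ^ 2 + ξ₁ ^ 2 * η₀ ^ 2 - 2 * ξ₀ ^ 2 * η₀ ^ 2) ≤ (ηe / η₀) ^ 2 := by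
    rw [div_pow, div_le_div_iff₀ hD (by positivity : (0:ℝ) < η₀ ^ 2)]
    nlinarith [hq]
  have hsqrt : Real.sqrt ((ξ₁ ^ 2 * η₁ ^ 2 - ξ₀ ^ 2 * η₀ ^ 2) /
      (ξ₀ ^ 2 * η₁ ^ 2 + ξ₁ ^ 2 * η₀ ^ 2 - 2 * ξ₀ ^ 2 * η₀ ^ 2)) ≤ ηe / η₀ := by
    calc Real.sqrt _ ≤ Real.sqrt ((ηe / η₀) ^ 2) := Real.sqrt_le_sqrt hkey
      _ = ηe / η₀ := Real.sqrt_sq (by positivity)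
  rw [hh, hs₂]
  calc ξ₀ * Real.sqrt _ ≤ ξ₀ * (ηe / η₀) := by
        exact mul_le_mul_of_nonneg_left hsqrt hξ₀.le
    _ = ξ₀ / η₀ * ηe := by ring
end

section
/- Let A, B > 0, put X := [0,A] and Y := [0,B], let μ_M be a Borel probability measure on X×Y, let ν be a Borel probability measure on X, and let β₀₀ > 0. Then there exists a Borel probability measure μ on X×Y satisfying ∬ s^i dμ(s,t) = ∫ s^i dν(s) for all integers i ≥ 0 and ∬ s^i t^{j+1} dμ(s,t) = β₀₀² ∬ s^i t^j dμ_M(s,t) for all integers i, j ≥ 0, if and only if the following three conditions hold: (i) the function (s,t) ↦ 1/t is μ_M-integrable; (ii) β₀₀² ∬ (1/t) dμ_M ≤ 1; (iii) for every Borel set E ⊆ X, β₀₀² ∬_{E×Y, t>0} (1/t) dμ_M(s,t) ≤ ν(E). Moreover, if β₀₀² ∬ (1/t) dμ_M = 1, then equality holds in (iii) for every Borel E ⊆ X. -/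
/-!
The monomials in `s, t` generate an algebra separating the points of a compact set, so finite
measures supported there are determined by their moments. Hence the moment conditions on `μ` say exactly
that the first marginal of `μ` is `ν` and that `t dμ = β₀₀² dμ_M`. The latter forces
`μ = β₀₀² t⁻¹ dμ_M` on `{t > 0}`, which gives (i)–(iii), with equality in (iii) when this part has
mass one. Conversely, by (iii) the first marginal of `ρ := β₀₀² t⁻¹ dμ_M` is at most `ν`, and
putting the missing mass on the axis `t = 0` does not change `t dμ`.
-/

open MeasureTheory Set BoundedContinuousFunction
open scoped ENNReal

theorem ENNReal.ofReal_mul_inv_ofReal_eq_indicator_s10 {X : Type*} {φ : X → ℝ} :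
    (fun x => ENNReal.ofReal (φ x)) * (fun x => (ENNReal.ofReal (φ x))⁻¹) =
      {x | 0 < φ x}.indicator 1 := by
  ext x
  by_cases hx : 0 < φ x
  · simp [hx, ENNReal.mul_inv_cancel (ENNReal.ofReal_pos.mpr hx).ne']
  · simp [hx, ENNReal.ofReal_eq_zero.mpr (not_lt.mp hx)]

namespace MeasureTheory

section Density

variable {X : Type*} [MeasurableSpace X] {φ : X → ℝ}

theorem Measure.withDensity_ofReal_withDensity_inv (hφ : Measurable φ) (μ : Measure X) :
    (μ.withDensity fun x => ENNReal.ofReal (φ x)).withDensity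
        (fun x => (ENNReal.ofReal (φ x))⁻¹) = μ.restrict {x | 0 < φ x} := by
  rw [← withDensity_mul _ (by fun_prop) (by fun_prop), ENNReal.ofReal_mul_inv_ofReal_eq_indicator_s10,
    withDensity_indicator_one (measurableSet_lt measurable_const hφ)]

theorem Measure.withDensity_inv_withDensity_ofReal (hφ : Measurable φ) (μ : Measure X) :
    (μ.withDensity fun x => (ENNReal.ofReal (φ x))⁻¹).withDensity
        (fun x => ENNReal.ofReal (φ x)) = μ.restrict {x | 0 < φ x} := by
  rw [← withDensity_mul _ (by fun_prop) (by fun_prop), mul_comm,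
    ENNReal.ofReal_mul_inv_ofReal_eq_indicator_s10,
    withDensity_indicator_one (measurableSet_lt measurable_const hφ)]

theorem integral_withDensity_ofReal {μ : Measure X} (hφ : Measurable φ)
    (hφ₀ : ∀ᵐ x ∂μ, 0 ≤ φ x) (f : X → ℝ) :
    ∫ x, f x ∂(μ.withDensity fun x => ENNReal.ofReal (φ x)) = ∫ x, φ x * f x ∂μ := by
  rw [integral_withDensity_eq_integral_toReal_smul (by fun_prop)
    (ae_of_all _ fun _ => ENNReal.ofReal_lt_top)]
  refine integral_congr_ae ?_
  filter_upwards [hφ₀] with x hx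
  rw [ENNReal.toReal_ofReal hx, smul_eq_mul]

end Density

theorem integral_eq_of_mem_adjoin {X : Type*} [TopologicalSpace X] [MeasurableSpace X]
    [OpensMeasurableSpace X] {P Q : Measure X} [IsFiniteMeasure P] [IsFiniteMeasure Q]
    {S : Set (X →ᵇ ℝ)} (h : ∀ f ∈ Submonoid.closure S, ∫ x, f x ∂P = ∫ x, f x ∂Q)
    {f : X →ᵇ ℝ} (hf : f ∈ Algebra.adjoin ℝ S) : ∫ x, f x ∂P = ∫ x, f x ∂Q := by
  rw [← Subalgebra.mem_toSubmodule, Algebra.adjoin_eq_span] at hf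
  induction hf using Submodule.span_induction with
  | mem f hf => exact h f hf
  | zero => simp
  | add f g _ _ hf hg =>
    simp only [BoundedContinuousFunction.coe_add, Pi.add_apply]
    rw [integral_add (f.integrable P) (g.integrable P),
      integral_add (f.integrable Q) (g.integrable Q), hf, hg]
  | smul a f _ hf =>
    simp only [BoundedContinuousFunction.coe_smul, integral_smul, hf]

theorem Measure.ext_of_moments {K : Set (ℝ × ℝ)} (hK : IsCompact K) {P Q : Measure (ℝ × ℝ)}
    [IsFiniteMeasure P] [IsFiniteMeasure Q] (hP : P Kᶜ = 0) (hQ : Q Kᶜ = 0)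
    (h : ∀ i j : ℕ, ∫ p, p.1 ^ i * p.2 ^ j ∂P = ∫ p, p.1 ^ i * p.2 ^ j ∂Q) : P = Q := by
  have hKm : MeasurableSet K := hK.measurableSet
  have hrestrict : ∀ R : Measure (ℝ × ℝ), R Kᶜ = 0 → R.restrict K = R :=
    fun R hR => Measure.restrict_eq_self_of_ae_mem (mem_ae_iff.mpr hR)
  rw [← hrestrict P hP, ← hrestrict Q hQ, ← map_comap_subtype_coe hKm,
    ← map_comap_subtype_coe hKm]
  congr 1
  -- on the compact space `K` the monomials are bounded continuous functions
  have : CompactSpace K := isCompact_iff_compactSpace.mp hK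
  let x₁ : K →ᵇ ℝ := mkOfCompact ⟨fun p => p.1.1, by fun_prop⟩
  let x₂ : K →ᵇ ℝ := mkOfCompact ⟨fun p => p.1.2, by fun_prop⟩
  have hstar : star ({x₁, x₂} : Set (K →ᵇ ℝ)) = {x₁, x₂} := by
    ext f
    have : star f = f := by ext; simp
    simp [this]
  refine ext_of_forall_mem_subalgebra_integral_eq_of_polish
    (A := StarAlgebra.adjoin ℝ {x₁, x₂}) ?_ ?_
  · intro x y hxy
    by_cases h₁ : x.1.1 = y.1.1
    · exact ⟨x₂, ⟨x₂.toContinuousMap, ⟨x₂, StarAlgebra.subset_adjoin ℝ _ (by simp), rfl⟩,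
        rfl⟩, fun h₂ => hxy (Subtype.ext (Prod.ext h₁ h₂))⟩
    · exact ⟨x₁, ⟨x₁.toContinuousMap, ⟨x₁, StarAlgebra.subset_adjoin ℝ _ (by simp), rfl⟩,
        rfl⟩, h₁⟩
  · intro f hf
    rw [← StarSubalgebra.mem_toSubalgebra, StarAlgebra.adjoin_toSubalgebra, hstar,
      union_self] at hf
    refine integral_eq_of_mem_adjoin (fun g hg => ?_) hf
    obtain ⟨i, j, rfl⟩ := (Submonoid.mem_closure_pair _ _ _).mp hg
    have hcomap : ∀ μ : Measure (ℝ × ℝ), μ Kᶜ = 0 →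
        ∫ x, (x₁ ^ i * x₂ ^ j) x ∂(μ.comap (↑)) = ∫ p, p.1 ^ i * p.2 ^ j ∂μ := by
      intro μ hμ
      exact (integral_subtype_comap hKm (fun p : ℝ × ℝ => p.1 ^ i * p.2 ^ j)).trans
        (by rw [hrestrict μ hμ])
    rw [hcomap P hP, hcomap Q hQ, h]

theorem Measure.map_fst_eq_of_moments {K : Set (ℝ × ℝ)} {L : Set ℝ} (hK : IsCompact K)
    (hL : IsCompact L) {μ : Measure (ℝ × ℝ)} {ν : Measure ℝ} [IsFiniteMeasure μ]
    [IsFiniteMeasure ν] (hμ : μ Kᶜ = 0) (hν : ν Lᶜ = 0)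
    (h : ∀ i : ℕ, ∫ p, p.1 ^ i ∂μ = ∫ s, s ^ i ∂ν) : μ.map Prod.fst = ν := by
  have he := measurableEmbedding_prod_mk_right (β := ℝ) (0 : ℝ)
  apply he.map_injective
  rw [Measure.map_map he.measurable measurable_fst]
  have hC : IsCompact ((fun s : ℝ => (s, (0 : ℝ))) '' (Prod.fst '' K ∪ L)) :=
    ((hK.image continuous_fst).union hL).image (by fun_prop)
  refine Measure.ext_of_moments hC ?_ ?_ fun i j => ?_
  · rw [Measure.map_apply (by fun_prop) hC.measurableSet.compl]
    refine measure_mono_null (fun p hp hpK => hp ⟨p.1, Or.inl ⟨p, hpK, rfl⟩, rfl⟩) hμ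
  · rw [Measure.map_apply (by fun_prop) hC.measurableSet.compl]
    exact measure_mono_null (fun s hs hsL => hs ⟨s, Or.inr hsL, rfl⟩) hν
  · rw [integral_map (by fun_prop) (by fun_prop), integral_map (by fun_prop) (by fun_prop)]
    cases j with
    | zero => simpa using h i
    | succ j => simp

theorem moments_iff_map_fst_and_withDensity_snd {K : Set (ℝ × ℝ)} {L : Set ℝ}
    (hK : IsCompact K) (hL : IsCompact L) (hK₀ : K ⊆ {p | 0 ≤ p.2}) {μ μM : Measure (ℝ × ℝ)}
    {ν : Measure ℝ} [IsFiniteMeasure μ] [IsFiniteMeasure μM] [IsFiniteMeasure ν]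
    (hμ : μ Kᶜ = 0) (hμM : μM Kᶜ = 0) (hν : ν Lᶜ = 0) {c : ℝ} (hc : 0 ≤ c) :
    ((∀ i : ℕ, ∫ p, p.1 ^ i ∂μ = ∫ s, s ^ i ∂ν) ∧
      ∀ i j : ℕ, ∫ p, p.1 ^ i * p.2 ^ (j + 1) ∂μ = c * ∫ p, p.1 ^ i * p.2 ^ j ∂μM) ↔
    μ.map Prod.fst = ν ∧ μ.withDensity (fun p => ENNReal.ofReal p.2) = ENNReal.ofReal c • μM := by
  have hμ₀ : ∀ᵐ p ∂μ, 0 ≤ p.2 := measure_mono_null (fun p hp hpK => hp (hK₀ hpK)) hμ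
  have hshift : ∀ i j : ℕ, ∫ p, p.1 ^ i * p.2 ^ j ∂(μ.withDensity fun p => ENNReal.ofReal p.2) =
      ∫ p, p.1 ^ i * p.2 ^ (j + 1) ∂μ := fun i j => by
    rw [integral_withDensity_ofReal measurable_snd hμ₀]
    congr 1 with p
    ring
  have hsmul : ∀ i j : ℕ, ∫ p, p.1 ^ i * p.2 ^ j ∂(ENNReal.ofReal c • μM) =
      c * ∫ p, p.1 ^ i * p.2 ^ j ∂μM := fun i j => by
    rw [integral_smul_measure, ENNReal.toReal_ofReal hc, smul_eq_mul]
  constructor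
  · rintro ⟨h₁, h₂⟩
    refine ⟨Measure.map_fst_eq_of_moments hK hL hμ hν h₁, ?_⟩
    have hsnd : Integrable (fun p : ℝ × ℝ => p.2) μ := by
      rw [← Measure.restrict_eq_self_of_ae_mem (mem_ae_iff.mpr hμ)]
      exact continuous_snd.continuousOn.integrableOn_compact hK
    have : IsFiniteMeasure (μ.withDensity fun p => ENNReal.ofReal p.2) :=
      isFiniteMeasure_withDensity_ofReal hsnd.hasFiniteIntegral
    have := μM.smul_finite (ENNReal.ofReal_ne_top (r := c))
    refine Measure.ext_of_moments hK ?_ ?_ fun i j => by rw [hshift, hsmul, h₂]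
    · rw [withDensity_apply _ hK.measurableSet.compl, Measure.restrict_eq_zero.mpr hμ,
        lintegral_zero_measure]
    · rw [Measure.smul_apply, hμM, smul_zero]
  · rintro ⟨hfst, hdens⟩
    refine ⟨fun i => ?_, fun i j => by rw [← hshift, hdens, hsmul]⟩
    rw [← hfst, integral_map measurable_fst.aemeasurable (by fun_prop)]

section Extension

variable {μ μM : Measure (ℝ × ℝ)} {ν : Measure ℝ} {c : ℝ≥0∞}

theorem mul_setLIntegral_inv_snd_eq
    (hdens : μ.withDensity (fun p => ENNReal.ofReal p.2) = c • μM) {S : Set (ℝ × ℝ)}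
    (hS : MeasurableSet S) :
    c * ∫⁻ p in S, (ENNReal.ofReal p.2)⁻¹ ∂μM = μ (S ∩ {p | 0 < p.2}) := by
  rw [← Measure.restrict_apply hS, ← Measure.withDensity_ofReal_withDensity_inv measurable_snd,
    hdens, withDensity_smul_measure, Measure.smul_apply, withDensity_apply _ hS, smul_eq_mul]

variable [IsProbabilityMeasure μ]

theorem inv_snd_conditions_of_withDensity_eq (hfst : μ.map Prod.fst = ν)
    (hdens : μ.withDensity (fun p => ENNReal.ofReal p.2) = c • μM) (hc : c ≠ 0) :
    ∫⁻ p, (ENNReal.ofReal p.2)⁻¹ ∂μM < ⊤ ∧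
      c * ∫⁻ p, (ENNReal.ofReal p.2)⁻¹ ∂μM ≤ 1 ∧
      ∀ E : Set ℝ, MeasurableSet E →
        c * ∫⁻ p in (E ×ˢ univ) ∩ {p : ℝ × ℝ | 0 < p.2}, (ENNReal.ofReal p.2)⁻¹ ∂μM ≤ ν E := by
  have htotal : c * ∫⁻ p, (ENNReal.ofReal p.2)⁻¹ ∂μM ≤ 1 := by
    rw [← setLIntegral_univ, mul_setLIntegral_inv_snd_eq hdens MeasurableSet.univ]
    exact prob_le_one
  refine ⟨ENNReal.lt_top_of_mul_ne_top_right (htotal.trans_lt ENNReal.one_lt_top).ne hc,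
    htotal, fun E hE => ?_⟩
  rw [mul_setLIntegral_inv_snd_eq hdens
      ((hE.prod MeasurableSet.univ).inter (measurableSet_lt measurable_const measurable_snd)),
    ← hfst, Measure.map_apply measurable_fst hE, ← prod_univ]
  exact measure_mono (inter_subset_left.trans inter_subset_left)

theorem mul_setLIntegral_inv_snd_prod_eq (hfst : μ.map Prod.fst = ν)
    (hdens : μ.withDensity (fun p => ENNReal.ofReal p.2) = c • μM)
    (h₁ : c * ∫⁻ p, (ENNReal.ofReal p.2)⁻¹ ∂μM = 1)
    {E : Set ℝ} (hE : MeasurableSet E) :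
    c * ∫⁻ p in (E ×ˢ univ) ∩ {p : ℝ × ℝ | 0 < p.2}, (ENNReal.ofReal p.2)⁻¹ ∂μM = ν E := by
  have hpos : MeasurableSet {p : ℝ × ℝ | 0 < p.2} :=
    measurableSet_lt measurable_const measurable_snd
  rw [← setLIntegral_univ, mul_setLIntegral_inv_snd_eq hdens .univ, univ_inter,
    ← prob_compl_eq_zero_iff hpos] at h₁
  rw [mul_setLIntegral_inv_snd_eq hdens ((hE.prod .univ).inter hpos), inter_assoc, inter_self,
    measure_inter_conull h₁, ← hfst, Measure.map_apply measurable_fst hE, prod_univ]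

end Extension

theorem exists_map_fst_eq_of_map_fst_le {ρ : Measure (ℝ × ℝ)} {ν : Measure ℝ}
    [IsFiniteMeasure ρ] (hρν : ρ.map Prod.fst ≤ ν) {K : Set (ℝ × ℝ)}
    {L : Set ℝ} (hK : MeasurableSet K) (hLK : L ×ˢ {0} ⊆ K) (hρ : ρ Kᶜ = 0) (hν : ν Lᶜ = 0) :
    ∃ μ : Measure (ℝ × ℝ), μ.map Prod.fst = ν ∧ μ Kᶜ = 0 ∧
      μ.withDensity (fun p => ENNReal.ofReal p.2) =
        ρ.withDensity (fun p => ENNReal.ofReal p.2) := by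
  have he : Measurable fun s : ℝ => (s, (0 : ℝ)) := by fun_prop
  refine ⟨ρ + (ν - ρ.map Prod.fst).map (fun s => (s, 0)), ?_, ?_, ?_⟩
  · rw [Measure.map_add _ _ measurable_fst, Measure.map_map measurable_fst he]
    simp only [Function.comp_def, Measure.map_id']
    exact (add_comm _ _).trans (Measure.sub_add_cancel_of_le hρν)
  · rw [Measure.add_apply, hρ, zero_add, Measure.map_apply he hK.compl]
    exact measure_mono_null (fun s hs hsL => hs (hLK ⟨hsL, rfl⟩))
      (Measure.absolutelyContinuous_of_le Measure.sub_le hν)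
  · rw [withDensity_add_measure,
      (withDensity_eq_zero_iff (μ := Measure.map _ _) (by fun_prop)).mpr, add_zero]
    exact (ae_map_iff he.aemeasurable (measurableSet_eq_fun (by fun_prop) measurable_const)).mpr
      (ae_of_all _ fun s => by simp)

theorem exists_of_inv_snd_conditions {K : Set (ℝ × ℝ)} {L : Set ℝ} (hK : MeasurableSet K)
    (hL : MeasurableSet L) (hKL : K ⊆ L ×ˢ univ) (hLK : L ×ˢ {0} ⊆ K) {μM : Measure (ℝ × ℝ)}
    {ν : Measure ℝ} [IsProbabilityMeasure ν] (hμM : μM Kᶜ = 0) (hν : ν Lᶜ = 0) {c : ℝ≥0∞}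
    (hfin : ∫⁻ p, (ENNReal.ofReal p.2)⁻¹ ∂μM < ⊤)
    (htotal : c * ∫⁻ p, (ENNReal.ofReal p.2)⁻¹ ∂μM ≤ 1)
    (hmarg : ∀ E : Set ℝ, MeasurableSet E → E ⊆ L →
        c * ∫⁻ p in (E ×ˢ univ) ∩ {p : ℝ × ℝ | 0 < p.2}, (ENNReal.ofReal p.2)⁻¹ ∂μM ≤ ν E) :
    ∃ μ : Measure (ℝ × ℝ), IsProbabilityMeasure μ ∧ μ Kᶜ = 0 ∧ μ.map Prod.fst = ν ∧
      μ.withDensity (fun p => ENNReal.ofReal p.2) = c • μM := by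
  have hposm : MeasurableSet {p : ℝ × ℝ | 0 < p.2} :=
    measurableSet_lt measurable_const measurable_snd
  have hpos : μM {p : ℝ × ℝ | 0 < p.2}ᶜ = 0 := mem_ae_iff.mp <|
    (ae_lt_top (by fun_prop) hfin.ne).mono fun p hp =>
      ENNReal.ofReal_pos.mp (ENNReal.inv_lt_top.mp hp)
  set ρ := c • μM.withDensity fun p => (ENNReal.ofReal p.2)⁻¹
  have hρ : ∀ S, MeasurableSet S → ρ S = c * ∫⁻ p in S, (ENNReal.ofReal p.2)⁻¹ ∂μM :=
    fun S hS => by rw [Measure.smul_apply, withDensity_apply _ hS, smul_eq_mul]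
  have hρnull : ∀ S, MeasurableSet S → μM S = 0 → ρ S = 0 := fun S hS h => by
    rw [hρ S hS, Measure.restrict_eq_zero.mpr h, lintegral_zero_measure, mul_zero]
  have : IsFiniteMeasure ρ :=
    ⟨by rw [hρ univ .univ, setLIntegral_univ]; exact htotal.trans_lt ENNReal.one_lt_top⟩
  have hρK : ρ Kᶜ = 0 := hρnull _ hK.compl hμM
  have hρL : ρ (L ×ˢ univ)ᶜ = 0 := measure_mono_null (compl_subset_compl.mpr hKL) hρK
  have hρν : ρ.map Prod.fst ≤ ν := by
    refine Measure.le_iff.mpr fun F hF => ?_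
    calc ρ.map Prod.fst F = ρ ((F ∩ L) ×ˢ univ ∩ {p | 0 < p.2}) := by
          rw [Measure.map_apply measurable_fst hF,
            measure_inter_conull (hρnull _ hposm.compl hpos), ← univ_inter univ,
            ← prod_inter_prod, measure_inter_conull hρL, prod_univ]
      _ ≤ ν (F ∩ L) := by
          rw [hρ _ (((hF.inter hL).prod MeasurableSet.univ).inter hposm)]
          exact hmarg _ (hF.inter hL) inter_subset_right
      _ ≤ ν F := measure_mono inter_subset_left
  obtain ⟨μ, hfst, hμK, hdens⟩ := exists_map_fst_eq_of_map_fst_le hρν hK hLK hρK hν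
  refine ⟨μ, ⟨?_⟩, hμK, hfst, ?_⟩
  · rw [← preimage_univ (f := Prod.fst), ← Measure.map_apply measurable_fst .univ, hfst,
      measure_univ]
  · rw [hdens, withDensity_smul_measure, Measure.withDensity_inv_withDensity_ofReal measurable_snd]
    exact congrArg (c • ·) (Measure.restrict_eq_self_of_ae_mem (mem_ae_iff.mpr hpos))

end MeasureTheory

theorem stmt10_general (A B : ℝ) (hB : 0 < B)
    (μM : Measure (ℝ × ℝ)) (hμMprob : IsProbabilityMeasure μM)
    (hμMsupp : μM (Set.Icc (0 : ℝ) A ×ˢ Set.Icc (0 : ℝ) B)ᶜ = 0)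
    (ν : Measure ℝ) (hνprob : IsProbabilityMeasure ν)
    (hνsupp : ν (Set.Icc (0 : ℝ) A)ᶜ = 0)
    (β₀₀ : ℝ) (hβ₀₀ : 0 < β₀₀) :
    ((∃ μ : Measure (ℝ × ℝ), IsProbabilityMeasure μ ∧
        μ (Set.Icc (0 : ℝ) A ×ˢ Set.Icc (0 : ℝ) B)ᶜ = 0 ∧
        (∀ i : ℕ, ∫ p, p.1 ^ i ∂μ = ∫ s, s ^ i ∂ν) ∧
        (∀ i j : ℕ, ∫ p, p.1 ^ i * p.2 ^ (j + 1) ∂μ =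
          β₀₀ ^ 2 * ∫ p, p.1 ^ i * p.2 ^ j ∂μM)) ↔
      ((∫⁻ p, (ENNReal.ofReal p.2)⁻¹ ∂μM) < ⊤ ∧
       ENNReal.ofReal (β₀₀ ^ 2) * (∫⁻ p, (ENNReal.ofReal p.2)⁻¹ ∂μM) ≤ 1 ∧
       (∀ E : Set ℝ, MeasurableSet E → E ⊆ Set.Icc (0 : ℝ) A →
         ENNReal.ofReal (β₀₀ ^ 2) *
           (∫⁻ p in (E ×ˢ (Set.univ : Set ℝ)) ∩ {p : ℝ × ℝ | 0 < p.2},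
             (ENNReal.ofReal p.2)⁻¹ ∂μM) ≤ ν E))) ∧
    ((∃ μ : Measure (ℝ × ℝ), IsProbabilityMeasure μ ∧
        μ (Set.Icc (0 : ℝ) A ×ˢ Set.Icc (0 : ℝ) B)ᶜ = 0 ∧
        (∀ i : ℕ, ∫ p, p.1 ^ i ∂μ = ∫ s, s ^ i ∂ν) ∧
        (∀ i j : ℕ, ∫ p, p.1 ^ i * p.2 ^ (j + 1) ∂μ =
          β₀₀ ^ 2 * ∫ p, p.1 ^ i * p.2 ^ j ∂μM)) →
      ENNReal.ofReal (β₀₀ ^ 2) * (∫⁻ p, (ENNReal.ofReal p.2)⁻¹ ∂μM) = 1 →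
      ∀ E : Set ℝ, MeasurableSet E → E ⊆ Set.Icc (0 : ℝ) A →
        ENNReal.ofReal (β₀₀ ^ 2) *
          (∫⁻ p in (E ×ˢ (Set.univ : Set ℝ)) ∩ {p : ℝ × ℝ | 0 < p.2},
            (ENNReal.ofReal p.2)⁻¹ ∂μM) = ν E) := by
  have hK : IsCompact (Icc (0 : ℝ) A ×ˢ Icc (0 : ℝ) B) := isCompact_Icc.prod isCompact_Icc
  have hKL : Icc (0 : ℝ) A ×ˢ Icc (0 : ℝ) B ⊆ Icc 0 A ×ˢ univ :=
    prod_mono subset_rfl (subset_univ _)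
  have hLK : Icc (0 : ℝ) A ×ˢ {0} ⊆ Icc 0 A ×ˢ Icc 0 B :=
    prod_mono subset_rfl (singleton_subset_iff.mpr ⟨le_rfl, hB.le⟩)
  have hc : ENNReal.ofReal (β₀₀ ^ 2) ≠ 0 := (ENNReal.ofReal_pos.mpr (by positivity)).ne'
  have hmoments := fun (μ : Measure (ℝ × ℝ)) (_ : IsProbabilityMeasure μ)
      (hμ : μ (Icc (0 : ℝ) A ×ˢ Icc (0 : ℝ) B)ᶜ = 0) =>
    moments_iff_map_fst_and_withDensity_snd hK isCompact_Icc (fun p hp => hp.2.1) hμ hμMsupp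
      hνsupp (sq_nonneg β₀₀)
  refine ⟨⟨fun ⟨μ, hμ, hμK, hm⟩ => ?_, fun ⟨hfin, htotal, hmarg⟩ => ?_⟩,
    fun ⟨μ, hμ, hμK, hm⟩ hone E hE _ => ?_⟩
  · obtain ⟨hfst, hdens⟩ := (hmoments μ hμ hμK).mp hm
    obtain ⟨hfin, htotal, hmarg⟩ := inv_snd_conditions_of_withDensity_eq hfst hdens hc
    exact ⟨hfin, htotal, fun E hE _ => hmarg E hE⟩
  · obtain ⟨μ, hμ, hμK, hfst, hdens⟩ := exists_of_inv_snd_conditions hK.measurableSet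
      measurableSet_Icc hKL hLK hμMsupp hνsupp hfin htotal hmarg
    exact ⟨μ, hμ, hμK, (hmoments μ hμ hμK).mpr ⟨hfst, hdens⟩⟩
  · obtain ⟨hfst, hdens⟩ := (hmoments μ hμ hμK).mp hm
    exact mul_setLIntegral_inv_snd_prod_eq hfst hdens hone hE

/-- Subnormal backward extension of a 2-variable weighted shift (measure form).
The integral of `1/t` is expressed as the lower integral of `(ENNReal.ofReal p.2)⁻¹`,
which is `∞` when `t = 0`, so its finiteness is exactly `1/t ∈ L¹(μ_M)`. -/
theorem stmt10 (A B : ℝ) (hA : 0 < A) (hB : 0 < B)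
    (μM : Measure (ℝ × ℝ)) (hμMprob : IsProbabilityMeasure μM)
    (hμMsupp : μM (Set.Icc (0 : ℝ) A ×ˢ Set.Icc (0 : ℝ) B)ᶜ = 0)
    (ν : Measure ℝ) (hνprob : IsProbabilityMeasure ν)
    (hνsupp : ν (Set.Icc (0 : ℝ) A)ᶜ = 0)
    (β₀₀ : ℝ) (hβ₀₀ : 0 < β₀₀) :
    ((∃ μ : Measure (ℝ × ℝ), IsProbabilityMeasure μ ∧
        μ (Set.Icc (0 : ℝ) A ×ˢ Set.Icc (0 : ℝ) B)ᶜ = 0 ∧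
        (∀ i : ℕ, ∫ p, p.1 ^ i ∂μ = ∫ s, s ^ i ∂ν) ∧
        (∀ i j : ℕ, ∫ p, p.1 ^ i * p.2 ^ (j + 1) ∂μ =
          β₀₀ ^ 2 * ∫ p, p.1 ^ i * p.2 ^ j ∂μM)) ↔
      ((∫⁻ p, (ENNReal.ofReal p.2)⁻¹ ∂μM) < ⊤ ∧
       ENNReal.ofReal (β₀₀ ^ 2) * (∫⁻ p, (ENNReal.ofReal p.2)⁻¹ ∂μM) ≤ 1 ∧
       (∀ E : Set ℝ, MeasurableSet E → E ⊆ Set.Icc (0 : ℝ) A →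
         ENNReal.ofReal (β₀₀ ^ 2) *
           (∫⁻ p in (E ×ˢ (Set.univ : Set ℝ)) ∩ {p : ℝ × ℝ | 0 < p.2},
             (ENNReal.ofReal p.2)⁻¹ ∂μM) ≤ ν E))) ∧
    ((∃ μ : Measure (ℝ × ℝ), IsProbabilityMeasure μ ∧
        μ (Set.Icc (0 : ℝ) A ×ˢ Set.Icc (0 : ℝ) B)ᶜ = 0 ∧
        (∀ i : ℕ, ∫ p, p.1 ^ i ∂μ = ∫ s, s ^ i ∂ν) ∧
        (∀ i j : ℕ, ∫ p, p.1 ^ i * p.2 ^ (j + 1) ∂μ =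
          β₀₀ ^ 2 * ∫ p, p.1 ^ i * p.2 ^ j ∂μM)) →
      ENNReal.ofReal (β₀₀ ^ 2) * (∫⁻ p, (ENNReal.ofReal p.2)⁻¹ ∂μM) = 1 →
      ∀ E : Set ℝ, MeasurableSet E → E ⊆ Set.Icc (0 : ℝ) A →
        ENNReal.ofReal (β₀₀ ^ 2) *
          (∫⁻ p in (E ×ˢ (Set.univ : Set ℝ)) ∩ {p : ℝ × ℝ | 0 < p.2},
            (ENNReal.ofReal p.2)⁻¹ ∂μM) = ν E) :=
  stmt10_general A B hB μM hμMprob hμMsupp ν hνprob hνsupp β₀₀ hβ₀₀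
end

section
/- Let 0 < a < 1, x > 0, y > 0 with max{y, x, ay/x} < 1. Define weights α(0,0) := x, α(i,0) := 1 for i ≥ 1, α(0,j) := a for j ≥ 1, α(i,j) := 1 for i ≥ 1, j ≥ 1; β(0,0) := y, β(i,0) := ay/x for i ≥ 1, β(i,j) := 1 for j ≥ 1. Then the six-point-test matrix M(k) is positive semidefinite for every k ∈ ℤ₊² if and only if y ≤ min{ x/a, x √( (1−x²) / (x² − 2a²x² + a⁴) ) }. -/
namespace Matrix

variable {R : Type*} [Field R] [LinearOrder R] [IsStrictOrderedRing R] [StarRing R] [TrivialStar R]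

theorem posSemidef_fin_two_iff_s11 (A B C : R) :
    (!![A, B; B, C] : Matrix (Fin 2) (Fin 2) R).PosSemidef ↔ 0 ≤ A ∧ 0 ≤ C ∧ B ^ 2 ≤ A * C := by
  have hHerm : (!![A, B; B, C] : Matrix (Fin 2) (Fin 2) R).IsHermitian := by
    ext i j
    fin_cases i <;> fin_cases j <;> simp
  have quadForm (s t : R) :
      star ![s, t] ⬝ᵥ !![A, B; B, C] *ᵥ ![s, t] = A * s ^ 2 + 2 * B * s * t + C * t ^ 2 := by
    simp only [star_trivial, dotProduct, mulVec, Fin.sum_univ_two, of_apply, cons_val', cons_val_zero,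
      cons_val_one, cons_val_fin_one, empty_val']
    ring
  rw [posSemidef_iff_dotProduct_mulVec]
  constructor
  · rintro ⟨-, hQ⟩
    have q (s t : R) : 0 ≤ A * s ^ 2 + 2 * B * s * t + C * t ^ 2 := quadForm s t ▸ hQ ![s, t]
    have hA : 0 ≤ A := by simpa using q 1 0
    have hC : 0 ≤ C := by simpa using q 0 1
    refine ⟨hA, hC, ?_⟩
    -- Evaluating at `(C, -B)` and `(B, -A)` gives `C (AC - B²) ≥ 0` and `A (AC - B²) ≥ 0`.
    have h₁ := q C (-B)
    have h₂ := q B (-A)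
    rcases (add_nonneg hA hC).eq_or_lt with hAC | hAC
    · have hB : B = 0 := by nlinarith [q 1 1, q 1 (-1)]
      subst hB
      nlinarith
    · nlinarith
  · rintro ⟨hA, hC, hB⟩
    refine ⟨hHerm, fun v => ?_⟩
    have hv : v = ![v 0, v 1] := by ext i; fin_cases i <;> rfl
    rw [hv, quadForm]
    rcases hA.eq_or_lt with hA0 | hA0
    · have : B = 0 := by nlinarith
      subst this hA0
      nlinarith [sq_nonneg (v 1)]
    · -- `A (A s² + 2 B s t + C t²) = (A s + B t)² + (AC - B²) t²`.
      nlinarith [sq_nonneg (A * v 0 + B * v 1), mul_nonneg (sub_nonneg.2 hB) (sq_nonneg (v 1))]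

end Matrix

theorem le_mul_sqrt_div_iff_s11 {x y N D : ℝ} (hx : 0 ≤ x) (hy : 0 ≤ y) (hN : 0 ≤ N) (hD : 0 < D) :
    y ≤ x * √(N / D) ↔ y ^ 2 * D ≤ x ^ 2 * N := by
  rw [← Real.sqrt_sq hx, ← Real.sqrt_mul (sq_nonneg x), Real.le_sqrt hy (by positivity),
    ← mul_div_assoc, le_div_iff₀ hD, Real.sqrt_sq hx]

def secondFamilyα (a x : ℝ) (k : ℕ × ℕ) : ℝ :=
  if k.1 = 0 then (if k.2 = 0 then x else a) else 1

noncomputable def secondFamilyβ (a x y : ℝ) (k : ℕ × ℕ) : ℝ :=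
  if k.2 = 0 then (if k.1 = 0 then y else a * y / x) else 1

section SecondFamily

variable (a x y : ℝ)

theorem sixPointMatrix_secondFamily_zero_zero (hx : x ≠ 0) :
    sixPointMatrix (secondFamilyα a x) (secondFamilyβ a x y) (0, 0) =
      !![1 - x ^ 2, (a ^ 2 - x ^ 2) * y / x; (a ^ 2 - x ^ 2) * y / x, 1 - y ^ 2] := by
  have hoff : a * (a * y / x) - x * y = (a ^ 2 - x ^ 2) * y / x := by
    field_simp
  simp [sixPointMatrix, secondFamilyα, secondFamilyβ, hoff]

theorem sixPointMatrix_secondFamily_zero_succ (j : ℕ) :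
    sixPointMatrix (secondFamilyα a x) (secondFamilyβ a x y) (0, j + 1) = !![1 - a ^ 2, 0; 0, 0] := by
  simp [sixPointMatrix, secondFamilyα, secondFamilyβ]

theorem sixPointMatrix_secondFamily_succ_zero (i : ℕ) :
    sixPointMatrix (secondFamilyα a x) (secondFamilyβ a x y) (i + 1, 0) =
      !![0, 0; 0, 1 - (a * y / x) ^ 2] := by
  simp [sixPointMatrix, secondFamilyα, secondFamilyβ]

theorem sixPointMatrix_secondFamily_succ_succ (i j : ℕ) :
    sixPointMatrix (secondFamilyα a x) (secondFamilyβ a x y) (i + 1, j + 1) = !![0, 0; 0, 0] := by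
  simp [sixPointMatrix, secondFamilyα, secondFamilyβ]

theorem forall_sixPointMatrix_secondFamily_posSemidef_iff (hx : x ≠ 0) :
    (∀ k, (sixPointMatrix (secondFamilyα a x) (secondFamilyβ a x y) k).PosSemidef) ↔
      (0 ≤ 1 - x ^ 2 ∧ 0 ≤ 1 - y ^ 2 ∧
        ((a ^ 2 - x ^ 2) * y / x) ^ 2 ≤ (1 - x ^ 2) * (1 - y ^ 2)) ∧
      a ^ 2 ≤ 1 ∧ (a * y / x) ^ 2 ≤ 1 := by
  simp only [← Matrix.posSemidef_fin_two_iff_s11, ← sixPointMatrix_secondFamily_zero_zero a x y hx]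
  constructor
  · intro h
    refine ⟨h (0, 0), ?_, ?_⟩
    · simpa [sixPointMatrix_secondFamily_zero_succ, Matrix.posSemidef_fin_two_iff_s11] using h (0, 1)
    · simpa [sixPointMatrix_secondFamily_succ_zero, Matrix.posSemidef_fin_two_iff_s11] using h (1, 0)
  · rintro ⟨h₀₀, ha, hayx⟩ ⟨_ | i, _ | j⟩
    · exact h₀₀
    · simpa [sixPointMatrix_secondFamily_zero_succ, Matrix.posSemidef_fin_two_iff_s11] using ha
    · simpa [sixPointMatrix_secondFamily_succ_zero, Matrix.posSemidef_fin_two_iff_s11] using hayx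
    · simp [sixPointMatrix_secondFamily_succ_succ, Matrix.posSemidef_fin_two_iff_s11]

theorem secondFamily_corner_condition_iff (hx : 0 < x) (hx₁ : x < 1) :
    (0 ≤ 1 - y ^ 2 ∧ ((a ^ 2 - x ^ 2) * y / x) ^ 2 ≤ (1 - x ^ 2) * (1 - y ^ 2)) ↔
      y ^ 2 * (x ^ 2 - 2 * a ^ 2 * x ^ 2 + a ^ 4) ≤ x ^ 2 * (1 - x ^ 2) := by
  have hN : 0 < x ^ 2 * (1 - x ^ 2) := mul_pos (by positivity) (by nlinarith)
  have hD : x ^ 2 - 2 * a ^ 2 * x ^ 2 + a ^ 4 = (a ^ 2 - x ^ 2) ^ 2 + x ^ 2 * (1 - x ^ 2) := by ring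
  rw [div_pow, div_le_iff₀ (by positivity), hD]
  constructor
  · rintro ⟨-, h⟩
    nlinarith
  · intro h
    have hy : y ^ 2 ≤ 1 := by nlinarith [sq_nonneg (y * (a ^ 2 - x ^ 2))]
    constructor <;> nlinarith

end SecondFamily

theorem stmt11_general (a x y : ℝ) (ha₀ : 0 < a) (ha₁ : a < 1) (hx : 0 < x) (hy : 0 < y)
    (hx₁ : x < 1)
    (α β : ℕ × ℕ → ℝ)
    (hα : ∀ i j : ℕ, α (i, j) = if i = 0 then (if j = 0 then x else a) else 1)
    (hβ : ∀ i j : ℕ, β (i, j) = if j = 0 then (if i = 0 then y else a * y / x) else 1) :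
    (∀ k : ℕ × ℕ, (sixPointMatrix α β k).PosSemidef) ↔
      y ≤ min (x / a)
        (x * Real.sqrt ((1 - x ^ 2) / (x ^ 2 - 2 * a ^ 2 * x ^ 2 + a ^ 4))) := by
  obtain rfl : α = secondFamilyα a x := funext fun k => hα k.1 k.2
  obtain rfl : β = secondFamilyβ a x y := funext fun k => hβ k.1 k.2
  have hx₁' : 0 < 1 - x ^ 2 := by nlinarith
  have hD : 0 < x ^ 2 - 2 * a ^ 2 * x ^ 2 + a ^ 4 := by
    nlinarith [sq_nonneg (a ^ 2 - x ^ 2), mul_pos (pow_pos hx 2) hx₁']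
  have ha : a ^ 2 ≤ 1 := by nlinarith
  have hayx : (a * y / x) ^ 2 ≤ 1 ↔ y ≤ x / a := by
    rw [sq_le_one_iff₀ (by positivity), div_le_one hx, le_div_iff₀ ha₀, mul_comm]
  rw [forall_sixPointMatrix_secondFamily_posSemidef_iff a x y hx.ne', hayx,
    secondFamily_corner_condition_iff a x y hx hx₁, le_min_iff,
    le_mul_sqrt_div_iff_s11 hx.le hy.le hx₁'.le hD]
  simp only [hx₁'.le, ha, true_and]
  exact and_comm

/-- Joint hyponormality of the second family of 2-variable weighted shifts
(Figure 3) is equivalent to `y ≤ min{x/a, x√((1−x²)/(x²−2a²x²+a⁴))}`. -/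
theorem stmt11 (a x y : ℝ) (ha₀ : 0 < a) (ha₁ : a < 1) (hx : 0 < x) (hy : 0 < y)
    (hx₁ : x < 1) (hy₁ : y < 1) (hayx : a * y / x < 1)
    (α β : ℕ × ℕ → ℝ)
    (hα : ∀ i j : ℕ, α (i, j) = if i = 0 then (if j = 0 then x else a) else 1)
    (hβ : ∀ i j : ℕ, β (i, j) = if j = 0 then (if i = 0 then y else a * y / x) else 1) :
    (∀ k : ℕ × ℕ, (sixPointMatrix α β k).PosSemidef) ↔
      y ≤ min (x / a)
        (x * Real.sqrt ((1 - x ^ 2) / (x ^ 2 - 2 * a ^ 2 * x ^ 2 + a ^ 4))) :=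
  stmt11_general a x y ha₀ ha₁ hx hy hx₁ α β hα hβ
end

section
/- Let 0 < a < 1, x > 0, y > 0 with max{y, x, ay/x} < 1. Then there exists a Borel probability measure μ on [0,1]² such that ∬ s^{k₁} dμ = x² for all k₁ ≥ 1, ∬ t^{k₂} dμ = y² for all k₂ ≥ 1, and ∬ s^{k₁} t^{k₂} dμ = a²y² for all k₁ ≥ 1, k₂ ≥ 1, if and only if y ≤ √( (1−x²) / (1−a²) ). -/
/-!
If `μ` lives on `[0,1]²` then `∫ (1 - s) (1 - t) dμ ≥ 0`; in terms of the prescribed moments this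
reads `1 - x² - y² + a²y² ≥ 0`, i.e. `y² (1 - a²) ≤ 1 - x²`.

Conversely, the prescribed moments are those of a measure on the corners `{0,1}²`: mass `a²y²` at
`(1,1)`, `x² - a²y²` at `(1,0)`, `(1 - a²) y²` at `(0,1)` and the rest `1 - x² - (1 - a²) y²` at
`(0,0)`. These masses are nonnegative because `ay < x` and `y² (1 - a²) ≤ 1 - x²`.
-/

open MeasureTheory Set

theorem ContinuousOn.integrable_of_measure_compl_eq_zero {X E : Type*} [TopologicalSpace X]
    [T2Space X] [MeasurableSpace X] [OpensMeasurableSpace X] [NormedAddCommGroup E]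
    {μ : Measure X} [IsFiniteMeasureOnCompacts μ] {K : Set X} (hK : IsCompact K)
    (hμK : μ Kᶜ = 0) {f : X → E} (hf : ContinuousOn f K) : Integrable f μ := by
  rw [← Measure.restrict_eq_self_of_ae_mem (ae_iff.2 hμK)]
  exact hf.integrableOn_compact hK

theorem integral_fst_add_integral_snd_le_one_add_integral_mul {μ : Measure (ℝ × ℝ)}
    [IsProbabilityMeasure μ] (hμ : μ (Icc (0 : ℝ) 1 ×ˢ Icc (0 : ℝ) 1)ᶜ = 0) :
    ∫ p, p.1 ∂μ + ∫ p, p.2 ∂μ ≤ 1 + ∫ p, p.1 * p.2 ∂μ := by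
  have hK : IsCompact (Icc (0 : ℝ) 1 ×ˢ Icc (0 : ℝ) 1) := isCompact_Icc.prod isCompact_Icc
  have hint {f : ℝ × ℝ → ℝ} (hf : Continuous f) : Integrable f μ :=
    hf.continuousOn.integrable_of_measure_compl_eq_zero hK hμ
  have hnonneg : 0 ≤ ∫ p, (1 - p.1) * (1 - p.2) ∂μ :=
    integral_nonneg_of_ae <| (ae_iff.2 hμ).mono fun p ⟨⟨_, h₁⟩, _, h₂⟩ ↦
      mul_nonneg (sub_nonneg.2 h₁) (sub_nonneg.2 h₂)
  have hexpand : ∫ p, (1 - p.1) * (1 - p.2) ∂μ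
      = 1 - ∫ p, p.1 ∂μ - ∫ p, p.2 ∂μ + ∫ p, p.1 * p.2 ∂μ := by
    have h₁ : Integrable (fun p : ℝ × ℝ ↦ p.1) μ := hint continuous_fst
    have h₂ : Integrable (fun p : ℝ × ℝ ↦ p.2) μ := hint continuous_snd
    have h₁₂ : Integrable (fun p : ℝ × ℝ ↦ p.1 * p.2) μ := hint (by fun_prop)
    simp_rw [one_sub_mul, mul_one_sub]
    rw [integral_sub (by exact (integrable_const 1).sub h₂) (by exact h₁.sub h₁₂),
      integral_sub (integrable_const 1) h₂,
      integral_sub h₁ h₁₂, integral_const, probReal_univ]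
    ring
  linarith

noncomputable def cornerMeasure (w₀₀ w₁₀ w₀₁ w₁₁ : ℝ) : Measure (ℝ × ℝ) :=
  ENNReal.ofReal w₀₀ • Measure.dirac (0, 0) + ENNReal.ofReal w₁₀ • Measure.dirac (1, 0) +
    ENNReal.ofReal w₀₁ • Measure.dirac (0, 1) + ENNReal.ofReal w₁₁ • Measure.dirac (1, 1)

section cornerMeasure

variable {w₀₀ w₁₀ w₀₁ w₁₁ : ℝ}

theorem cornerMeasure_compl_unitSquare :
    cornerMeasure w₀₀ w₁₀ w₀₁ w₁₁ (Icc (0 : ℝ) 1 ×ˢ Icc (0 : ℝ) 1)ᶜ = 0 := by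
  simp [cornerMeasure]

theorem isProbabilityMeasure_cornerMeasure (h₀₀ : 0 ≤ w₀₀) (h₁₀ : 0 ≤ w₁₀) (h₀₁ : 0 ≤ w₀₁)
    (h₁₁ : 0 ≤ w₁₁) (hsum : w₀₀ + w₁₀ + w₀₁ + w₁₁ = 1) :
    IsProbabilityMeasure (cornerMeasure w₀₀ w₁₀ w₀₁ w₁₁) := by
  constructor
  have h₀ := add_nonneg h₀₀ h₁₀
  simp only [cornerMeasure, Measure.coe_add, Pi.add_apply, Measure.coe_smul, Pi.smul_apply,
    measure_univ, smul_eq_mul, mul_one]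
  rw [← ENNReal.ofReal_add h₀₀ h₁₀, ← ENNReal.ofReal_add h₀ h₀₁,
    ← ENNReal.ofReal_add (add_nonneg h₀ h₀₁) h₁₁, hsum, ENNReal.ofReal_one]

variable (h₀₀ : 0 ≤ w₀₀) (h₁₀ : 0 ≤ w₁₀) (h₀₁ : 0 ≤ w₀₁) (h₁₁ : 0 ≤ w₁₁)
include h₀₀ h₁₀ h₀₁ h₁₁

theorem integral_cornerMeasure {E : Type*} [NormedAddCommGroup E] [NormedSpace ℝ E]
    [CompleteSpace E] (f : ℝ × ℝ → E) :
    ∫ p, f p ∂cornerMeasure w₀₀ w₁₀ w₀₁ w₁₁ =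
      w₀₀ • f (0, 0) + w₁₀ • f (1, 0) + w₀₁ • f (0, 1) + w₁₁ • f (1, 1) := by
  have hint (c : ℝ) (x : ℝ × ℝ) : Integrable f (ENNReal.ofReal c • Measure.dirac x) :=
    (integrable_dirac enorm_lt_top).smul_measure ENNReal.ofReal_ne_top
  simp [cornerMeasure, integral_add_measure, integral_dirac, *]

theorem integral_fst_pow_cornerMeasure {k : ℕ} (hk : k ≠ 0) :
    ∫ p, p.1 ^ k ∂cornerMeasure w₀₀ w₁₀ w₀₁ w₁₁ = w₁₀ + w₁₁ := by
  simp [integral_cornerMeasure h₀₀ h₁₀ h₀₁ h₁₁, hk]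

theorem integral_snd_pow_cornerMeasure {k : ℕ} (hk : k ≠ 0) :
    ∫ p, p.2 ^ k ∂cornerMeasure w₀₀ w₁₀ w₀₁ w₁₁ = w₀₁ + w₁₁ := by
  simp [integral_cornerMeasure h₀₀ h₁₀ h₀₁ h₁₁, hk]

theorem integral_fst_pow_mul_snd_pow_cornerMeasure {k l : ℕ} (hk : k ≠ 0) (hl : l ≠ 0) :
    ∫ p, p.1 ^ k * p.2 ^ l ∂cornerMeasure w₀₀ w₁₀ w₀₁ w₁₁ = w₁₁ := by
  simp [integral_cornerMeasure h₀₀ h₁₀ h₀₁ h₁₁, hk, hl]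

end cornerMeasure

theorem stmt12_general (a x y : ℝ) (ha₀ : 0 < a) (ha₁ : a < 1) (hx : 0 < x) (hy : 0 < y)
    (hayx : a * y / x < 1) :
    (∃ μ : Measure (ℝ × ℝ), IsProbabilityMeasure μ ∧
        μ (Set.Icc (0 : ℝ) 1 ×ˢ Set.Icc (0 : ℝ) 1)ᶜ = 0 ∧
        (∀ k₁ : ℕ, 1 ≤ k₁ → ∫ p, p.1 ^ k₁ ∂μ = x ^ 2) ∧
        (∀ k₂ : ℕ, 1 ≤ k₂ → ∫ p, p.2 ^ k₂ ∂μ = y ^ 2) ∧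
        (∀ k₁ k₂ : ℕ, 1 ≤ k₁ → 1 ≤ k₂ →
          ∫ p, p.1 ^ k₁ * p.2 ^ k₂ ∂μ = a ^ 2 * y ^ 2)) ↔
      y ≤ Real.sqrt ((1 - x ^ 2) / (1 - a ^ 2)) := by
  have ha : 0 < 1 - a ^ 2 := by nlinarith
  rw [Real.le_sqrt' hy, le_div_iff₀ ha]
  constructor
  · rintro ⟨μ, hμ, hsupp, h₁, h₂, h₁₂⟩
    have key := integral_fst_add_integral_snd_le_one_add_integral_mul hsupp
    have m₁ := h₁ 1 le_rfl
    have m₂ := h₂ 1 le_rfl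
    have m₁₂ := h₁₂ 1 1 le_rfl le_rfl
    simp only [pow_one] at m₁ m₂ m₁₂
    linarith
  · intro hy₂
    have hay : a * y < x := (div_lt_one hx).1 hayx
    have h₀₀ : 0 ≤ 1 - x ^ 2 - (1 - a ^ 2) * y ^ 2 := by linarith
    have h₁₀ : 0 ≤ x ^ 2 - a ^ 2 * y ^ 2 := by nlinarith [mul_pos ha₀ hy]
    have h₀₁ : 0 ≤ (1 - a ^ 2) * y ^ 2 := by positivity
    have h₁₁ : 0 ≤ a ^ 2 * y ^ 2 := by positivity
    refine ⟨cornerMeasure _ _ _ _, isProbabilityMeasure_cornerMeasure h₀₀ h₁₀ h₀₁ h₁₁ (by ring),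
      cornerMeasure_compl_unitSquare, fun k hk ↦ ?_, fun k hk ↦ ?_, fun k l hk hl ↦ ?_⟩
    · rw [integral_fst_pow_cornerMeasure h₀₀ h₁₀ h₀₁ h₁₁ (by omega)]; ring
    · rw [integral_snd_pow_cornerMeasure h₀₀ h₁₀ h₀₁ h₁₁ (by omega)]; ring
    · exact integral_fst_pow_mul_snd_pow_cornerMeasure h₀₀ h₁₀ h₀₁ h₁₁ (by omega) (by omega)

/-- Subnormality of the second family of 2-variable weighted shifts (Figure 3):
an interpolating Berger measure on `[0,1]²` exists iff `y ≤ √((1−x²)/(1−a²))`. -/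
theorem stmt12 (a x y : ℝ) (ha₀ : 0 < a) (ha₁ : a < 1) (hx : 0 < x) (hy : 0 < y)
    (hx₁ : x < 1) (hy₁ : y < 1) (hayx : a * y / x < 1) :
    (∃ μ : Measure (ℝ × ℝ), IsProbabilityMeasure μ ∧
        μ (Set.Icc (0 : ℝ) 1 ×ˢ Set.Icc (0 : ℝ) 1)ᶜ = 0 ∧
        (∀ k₁ : ℕ, 1 ≤ k₁ → ∫ p, p.1 ^ k₁ ∂μ = x ^ 2) ∧
        (∀ k₂ : ℕ, 1 ≤ k₂ → ∫ p, p.2 ^ k₂ ∂μ = y ^ 2) ∧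
        (∀ k₁ k₂ : ℕ, 1 ≤ k₁ → 1 ≤ k₂ →
          ∫ p, p.1 ^ k₁ * p.2 ^ k₂ ∂μ = a ^ 2 * y ^ 2)) ↔
      y ≤ Real.sqrt ((1 - x ^ 2) / (1 - a ^ 2)) :=
  stmt12_general a x y ha₀ ha₁ hx hy hayx
end

section
/- Let 0 < a < x < 1. Then √( (1−x²)/(1−a²) ) < x √( (1−x²)/(x² + a⁴ − 2a²x²) ) < x/a. -/
/-- For `0 < a < x < 1`:
`√((1−x²)/(1−a²)) < x√((1−x²)/(x²+a⁴−2a²x²)) < x/a`. -/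
theorem stmt14 (a x : ℝ) (ha : 0 < a) (hax : a < x) (hx : x < 1) :
    Real.sqrt ((1 - x ^ 2) / (1 - a ^ 2)) <
      x * Real.sqrt ((1 - x ^ 2) / (x ^ 2 + a ^ 4 - 2 * a ^ 2 * x ^ 2)) ∧
    x * Real.sqrt ((1 - x ^ 2) / (x ^ 2 + a ^ 4 - 2 * a ^ 2 * x ^ 2)) < x / a := by
  have hx0 : 0 < x := ha.trans hax
  have h1x : 0 < 1 - x ^ 2 := by nlinarith
  have hD : 0 < x ^ 2 + a ^ 4 - 2 * a ^ 2 * x ^ 2 := by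
    nlinarith [sq_nonneg (x ^ 2 - a ^ 2), mul_pos h1x (pow_pos hx0 2)]
  have h1a : 0 < 1 - a ^ 2 := by nlinarith
  have hxa2 : 0 < x ^ 2 - a ^ 2 := by nlinarith
  have hmul : x * Real.sqrt ((1 - x ^ 2) / (x ^ 2 + a ^ 4 - 2 * a ^ 2 * x ^ 2))
      = Real.sqrt (x ^ 2 * ((1 - x ^ 2) / (x ^ 2 + a ^ 4 - 2 * a ^ 2 * x ^ 2))) := by
    rw [Real.sqrt_mul (sq_nonneg x), Real.sqrt_sq hx0.le]
  constructor
  · rw [hmul]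
    apply Real.sqrt_lt_sqrt (by positivity)
    rw [mul_div_assoc', div_lt_div_iff₀ h1a hD]
    nlinarith [mul_pos (mul_pos h1x (pow_pos ha 2)) hxa2]
  · rw [hmul]
    rw [show x / a = Real.sqrt ((x / a) ^ 2) from (Real.sqrt_sq (by positivity)).symm]
    apply Real.sqrt_lt_sqrt (by positivity)
    rw [div_pow, mul_div_assoc', div_lt_div_iff₀ hD (by positivity)]
    nlinarith [mul_pos (mul_pos (pow_pos hx0 2) hxa2) h1a]
end

section
/- Let {ξ_n}_{n≥1} be a strictly increasing sequence with 0 < ξ_n < 1 for all n, and let ν be a Borel probability measure on (0,1] such that ∫ s^n dν(s) = ξ₁²ξ₂²⋯ξ_n² for all n ≥ 1 and such that s ↦ 1/s² is ν-integrable. Set ξ_e := (∫ (1/s) dν(s))^{−1/2}, and let a, b > 0 satisfy a ≤ ξ_e^{−1} (∫ (1/s²) dν(s))^{−1/2}, b ≤ ξ_e², and 2a² ≤ b² + ξ_e². Define weights α(0,0) := a, α(1,0) := ξ_e, α(i,0) := ξ_{i−1} for i ≥ 2, α(0,1) := b, α(0,j) := ξ_{j−1} b / ξ_e for j ≥ 2,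 α(i,j) := ξ_i for i ≥ 1, j ≥ 1, and β(i,j) := α(j,i) for all (i,j) ∈ ℤ₊². Then the six-point-test matrix M(k) is positive semidefinite for every k ∈ ℤ₊². -/
/-!
Off the axes `α(i, j + 1) = α(i, j)` and `β(i + 1, j) = β(i, j)`, so `M(k)` is diagonal, with
nonnegative entries because `ξ` increases. Along the first axis `β(·, 0) = (b / ξe) α(·, 0)` and
`α(i, 1) = α(i + 1, 0)`, so with `d = α(i + 1, 0)² - α(i, 0)² ≥ 0` the determinant of `M(i, 0)` is
`d (ξ₁² - (b / ξe)² α(i + 1, 0)²)`; it is nonnegative because `b / ξe ≤ ξe ≤ ξ₁`, where the last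
inequality is Jensen's `(∫ 1/s dν)⁻¹ ≤ ∫ s dν = ξ₁²`. The second axis follows from the first by the
symmetry `β = α ∘ swap`, and at the origin `b ≤ ξe` and `2a² ≤ b² + ξe²` are exactly what is needed.
-/

open MeasureTheory

theorem Matrix.posSemidef_fin_two_of_sq_le {p q r : ℝ} (hp : 0 ≤ p) (hr : 0 ≤ r)
    (hq : q ^ 2 ≤ p * r) : (!![p, q; q, r] : Matrix (Fin 2) (Fin 2) ℝ).PosSemidef := by
  refine Matrix.posSemidef_iff_dotProduct_mulVec.2 ⟨?_, fun x => ?_⟩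
  · ext i j
    fin_cases i <;> fin_cases j <;> rfl
  · simp only [Matrix.mulVec, dotProduct, Fin.sum_univ_two, Matrix.of_apply, Matrix.cons_val',
      Matrix.cons_val_zero, Matrix.cons_val_one, Matrix.empty_val', Matrix.cons_val_fin_one,
      star_trivial]
    rcases hp.eq_or_lt with rfl | hp
    · obtain rfl : q = 0 := by nlinarith
      nlinarith [mul_nonneg hr (sq_nonneg (x 1))]
    · refine nonneg_of_mul_nonneg_right ?_ hp
      nlinarith [sq_nonneg (p * x 0 + q * x 1), mul_nonneg (sub_nonneg.2 hq) (sq_nonneg (x 1))]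

section SixPointMatrix

variable {α β : ℕ × ℕ → ℝ}

theorem sixPointMatrix_swap (hβ : ∀ k : ℕ × ℕ, β k = α (k.2, k.1)) (k : ℕ × ℕ) :
    sixPointMatrix α β k.swap =
      (sixPointMatrix α β k).submatrix (Equiv.swap 0 1) (Equiv.swap 0 1) := by
  obtain ⟨i, j⟩ := k
  ext a b
  fin_cases a <;> fin_cases b <;> simp [sixPointMatrix, hβ, mul_comm]

theorem posSemidef_sixPointMatrix_swap_iff (hβ : ∀ k : ℕ × ℕ, β k = α (k.2, k.1))
    (k : ℕ × ℕ) : (sixPointMatrix α β k.swap).PosSemidef ↔ (sixPointMatrix α β k).PosSemidef := by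
  rw [sixPointMatrix_swap hβ, Matrix.posSemidef_submatrix_equiv]

theorem posSemidef_sixPointMatrix_of_diagonal {k : ℕ × ℕ}
    (hα : α (k.1, k.2 + 1) = α k) (hβ : β (k.1 + 1, k.2) = β k)
    (hα_le : α k ^ 2 ≤ α (k.1 + 1, k.2) ^ 2) (hβ_le : β k ^ 2 ≤ β (k.1, k.2 + 1) ^ 2) :
    (sixPointMatrix α β k).PosSemidef := by
  rw [sixPointMatrix, hα, hβ, sub_self]
  exact Matrix.posSemidef_fin_two_of_sq_le (sub_nonneg.2 hα_le) (sub_nonneg.2 hβ_le)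
    (by nlinarith)

theorem posSemidef_sixPointMatrix_of_proportional {k : ℕ × ℕ} (c : ℝ)
    (hα : α (k.1, k.2 + 1) = α (k.1 + 1, k.2))
    (hβ₁ : β (k.1 + 1, k.2) = c * α (k.1 + 1, k.2)) (hβ₀ : β k = c * α k)
    (hα_le : α k ^ 2 ≤ α (k.1 + 1, k.2) ^ 2)
    (hc : (c * α (k.1 + 1, k.2)) ^ 2 ≤ β (k.1, k.2 + 1) ^ 2) :
    (sixPointMatrix α β k).PosSemidef := by
  rw [sixPointMatrix, hα, hβ₁, hβ₀]
  set u := α k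
  set v := α (k.1 + 1, k.2)
  set r := β (k.1, k.2 + 1)
  have hdet : (v ^ 2 - u ^ 2) * (r ^ 2 - (c * u) ^ 2) - (v * (c * v) - u * (c * u)) ^ 2
      = (v ^ 2 - u ^ 2) * (r ^ 2 - (c * v) ^ 2) := by ring
  refine Matrix.posSemidef_fin_two_of_sq_le (sub_nonneg.2 hα_le)
    (by nlinarith [mul_le_mul_of_nonneg_left hα_le (sq_nonneg c)]) ?_
  nlinarith [mul_nonneg (sub_nonneg.2 hα_le) (sub_nonneg.2 hc)]

end SixPointMatrix

section ExtremalValue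

variable {ν : Measure ℝ} [IsProbabilityMeasure ν]

theorem inv_integral_inv_le_integral (hpos : ∀ᵐ s ∂ν, 0 < s)
    (hid : Integrable (fun s => s) ν) (hinv : Integrable (fun s => 1 / s) ν) :
    (∫ s, 1 / s ∂ν)⁻¹ ≤ ∫ s, s ∂ν := by
  set m := ∫ s, 1 / s ∂ν
  rcases le_or_gt m 0 with hm | hm
  · exact (inv_nonpos.2 hm).trans (integral_nonneg_of_ae (hpos.mono fun s hs => hs.le))
  -- pointwise AM-GM `m s + 1 / (m s) ≥ 2`, integrated against `ν`
  have htangent : ∀ᵐ s ∂ν, 2 / m - (1 / s) / m ^ 2 ≤ s := by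
    filter_upwards [hpos] with s hs
    have : s - (2 / m - (1 / s) / m ^ 2) = (m * s - 1) ^ 2 / (m ^ 2 * s) := by
      field_simp
      ring
    linarith [div_nonneg (sq_nonneg (m * s - 1)) (by positivity : (0 : ℝ) ≤ m ^ 2 * s)]
  calc m⁻¹ = ∫ s, (2 / m - (1 / s) / m ^ 2) ∂ν := by
        rw [integral_sub (integrable_const _) (hinv.div_const _), integral_const, integral_div,
          probReal_univ, one_smul]
        field_simp
        ring
    _ ≤ ∫ s, s ∂ν := integral_mono_ae ((integrable_const _).sub (hinv.div_const _)) hid htangent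

theorem sqrt_inv_integral_inv_pos_and_le (hν : ∀ᵐ s ∂ν, s ∈ Set.Ioc (0 : ℝ) 1)
    (hint : Integrable (fun s => 1 / s ^ 2) ν) :
    0 < √(∫ s, 1 / s ∂ν)⁻¹ ∧ √(∫ s, 1 / s ∂ν)⁻¹ ≤ √(∫ s, s ∂ν) := by
  have hinv : Integrable (fun s => 1 / s) ν := by
    refine hint.mono (by fun_prop) ?_
    filter_upwards [hν] with s ⟨hs₀, hs₁⟩
    rw [Real.norm_of_nonneg (by positivity), Real.norm_of_nonneg (by positivity)]
    exact one_div_le_one_div_of_le (by positivity) (by nlinarith)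
  have hid : Integrable (fun s => s) ν := by
    refine Integrable.of_bound (by fun_prop) 1 ?_
    filter_upwards [hν] with s ⟨hs₀, hs₁⟩
    rwa [Real.norm_of_nonneg hs₀.le]
  have hone : 1 ≤ ∫ s, 1 / s ∂ν := by
    calc (1 : ℝ) = ∫ _, (1 : ℝ) ∂ν := by simp
      _ ≤ ∫ s, 1 / s ∂ν := integral_mono_ae (integrable_const _) hinv <| by
          filter_upwards [hν] with s ⟨hs₀, hs₁⟩
          exact one_le_one_div hs₀ hs₁
  exact ⟨Real.sqrt_pos.2 (by positivity), Real.sqrt_le_sqrt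
    (inv_integral_inv_le_integral (hν.mono fun s hs => hs.1) hid hinv)⟩

end ExtremalValue

noncomputable def thirdFamilyWeight (ξ : ℕ → ℝ) (ξe a b : ℝ) : ℕ × ℕ → ℝ
  | (0, 0) => a
  | (1, 0) => ξe
  | (i + 2, 0) => ξ (i + 1)
  | (0, 1) => b
  | (0, j + 2) => ξ (j + 1) * b / ξe
  | (i + 1, _ + 1) => ξ (i + 1)

section ThirdFamily

variable {ξ : ℕ → ℝ} {ξe a b : ℝ}

local notation "w" => thirdFamilyWeight ξ ξe a b

theorem posSemidef_sixPointMatrix_thirdFamilyWeight_zero_zero (hb : b ^ 2 ≤ ξe ^ 2)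
    (hab : 2 * a ^ 2 ≤ b ^ 2 + ξe ^ 2) :
    (sixPointMatrix w (fun k => w (k.2, k.1)) (0, 0)).PosSemidef := by
  show (!![ξe ^ 2 - a ^ 2, b * b - a * a; b * b - a * a, ξe ^ 2 - a ^ 2]).PosSemidef
  refine Matrix.posSemidef_fin_two_of_sq_le (by linarith) (by linarith) ?_
  nlinarith [mul_nonneg (sub_nonneg.2 hb) (by linarith : (0 : ℝ) ≤ b ^ 2 + ξe ^ 2 - 2 * a ^ 2)]

theorem posSemidef_sixPointMatrix_thirdFamilyWeight_succ_zero
    (hmono : Monotone fun n => ξ (n + 1)) (hξ₁ : ∀ n, ξ (n + 1) ≤ 1)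
    (he₀ : 0 < ξe) (he₁ : ξe ≤ ξ 1) (hb₀ : 0 < b) (hb : b ≤ ξe ^ 2) (i : ℕ) :
    (sixPointMatrix w (fun k => w (k.2, k.1)) (i + 1, 0)).PosSemidef := by
  have hξ₀ (n : ℕ) : 0 < ξ (n + 1) := he₀.trans_le (he₁.trans (hmono n.zero_le))
  have hc : b / ξe ≤ ξe := by rwa [div_le_iff₀ he₀, ← sq]
  refine posSemidef_sixPointMatrix_of_proportional (b / ξe)
    (by simp [thirdFamilyWeight]) ?_ ?_ ?_ ?_
  · show ξ (i + 1) * b / ξe = b / ξe * ξ (i + 1)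
    ring
  · rcases i with _ | j
    · show b = b / ξe * ξe
      field_simp
    · show ξ (j + 1) * b / ξe = b / ξe * ξ (j + 1)
      ring
  · rcases i with _ | j
    · exact pow_le_pow_left₀ he₀.le he₁ 2
    · exact pow_le_pow_left₀ (hξ₀ j).le (hmono j.le_succ) 2
  · show (b / ξe * ξ (i + 1)) ^ 2 ≤ ξ 1 ^ 2
    refine pow_le_pow_left₀ (mul_nonneg (by positivity) (hξ₀ i).le) ?_ 2
    calc b / ξe * ξ (i + 1) ≤ b / ξe * 1 := by gcongr; exact hξ₁ i
      _ ≤ ξ 1 := by linarith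

theorem posSemidef_sixPointMatrix_thirdFamilyWeight_succ_succ
    (hmono : Monotone fun n => ξ (n + 1)) (hξ₀ : ∀ n, 0 < ξ (n + 1)) (i j : ℕ) :
    (sixPointMatrix w (fun k => w (k.2, k.1)) (i + 1, j + 1)).PosSemidef :=
  posSemidef_sixPointMatrix_of_diagonal (by simp [thirdFamilyWeight])
    (by simp [thirdFamilyWeight])
    (by simpa [thirdFamilyWeight] using pow_le_pow_left₀ (hξ₀ i).le (hmono i.le_succ) 2)
    (by simpa [thirdFamilyWeight] using pow_le_pow_left₀ (hξ₀ j).le (hmono j.le_succ) 2)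

end ThirdFamily

theorem stmt15_general (ξ : ℕ → ℝ) (ν : Measure ℝ) (hνprob : IsProbabilityMeasure ν)
    (hνsupp : ν (Set.Ioc (0 : ℝ) 1)ᶜ = 0)
    (hξpos : ∀ n : ℕ, 1 ≤ n → 0 < ξ n) (hξlt1 : ∀ n : ℕ, 1 ≤ n → ξ n < 1)
    (hξmono : ∀ n : ℕ, 1 ≤ n → ξ n < ξ (n + 1))
    (hmom : ∀ n : ℕ, 1 ≤ n → ∫ s, s ^ n ∂ν = ∏ i ∈ Finset.Icc 1 n, ξ i ^ 2)
    (hint : Integrable (fun s => 1 / s ^ 2) ν)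
    (ξe : ℝ) (hξe : ξe = Real.sqrt (∫ s, 1 / s ∂ν)⁻¹)
    (a b : ℝ) (hb₀ : 0 < b)
    (hb : b ≤ ξe ^ 2) (hab : 2 * a ^ 2 ≤ b ^ 2 + ξe ^ 2)
    (α β : ℕ × ℕ → ℝ)
    (hα : ∀ i j : ℕ, α (i, j) =
      if j = 0 then (if i = 0 then a else if i = 1 then ξe else ξ (i - 1))
      else if i = 0 then (if j = 1 then b else ξ (j - 1) * b / ξe)
      else ξ i)
    (hβ : ∀ k : ℕ × ℕ, β k = α (k.2, k.1)) :
    ∀ k : ℕ × ℕ, (sixPointMatrix α β k).PosSemidef := by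
  have hmono : Monotone fun n => ξ (n + 1) :=
    monotone_nat_of_le_succ fun n => (hξmono (n + 1) n.succ_pos).le
  have hξ₀ (n : ℕ) : 0 < ξ (n + 1) := hξpos (n + 1) n.succ_pos
  have hξ₁ (n : ℕ) : ξ (n + 1) ≤ 1 := (hξlt1 (n + 1) n.succ_pos).le
  obtain ⟨he₀, he₁⟩ : 0 < ξe ∧ ξe ≤ ξ 1 := by
    have hfirst : ∫ s, s ∂ν = ξ 1 ^ 2 := by simpa using hmom 1 le_rfl
    simpa only [← hξe, hfirst, Real.sqrt_sq (hξ₀ 0).le] using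
      sqrt_inv_integral_inv_pos_and_le (mem_ae_iff.2 hνsupp) hint
  have hb_sq : b ^ 2 ≤ ξe ^ 2 :=
    pow_le_pow_left₀ hb₀.le (hb.trans (by nlinarith [hξ₁ 0])) 2
  obtain rfl : α = thirdFamilyWeight ξ ξe a b := funext fun ⟨i, j⟩ => by
    rcases i with _ | _ | i <;> rcases j with _ | _ | j <;> simp [hα, thirdFamilyWeight]
  obtain rfl : β = fun k => thirdFamilyWeight ξ ξe a b (k.2, k.1) := funext hβ
  rintro ⟨_ | i, _ | j⟩
  · exact posSemidef_sixPointMatrix_thirdFamilyWeight_zero_zero hb_sq hab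
  · exact (posSemidef_sixPointMatrix_swap_iff hβ (j + 1, 0)).2 <|
      posSemidef_sixPointMatrix_thirdFamilyWeight_succ_zero hmono hξ₁ he₀ he₁ hb₀ hb j
  · exact posSemidef_sixPointMatrix_thirdFamilyWeight_succ_zero hmono hξ₁ he₀ he₁ hb₀ hb i
  · exact posSemidef_sixPointMatrix_thirdFamilyWeight_succ_succ hmono hξ₀ i j

/-- The third family of 2-variable weighted shifts (Figure 5) is jointly
hyponormal under conditions (i)–(vii). -/
theorem stmt15 (ξ : ℕ → ℝ) (ν : Measure ℝ) (hνprob : IsProbabilityMeasure ν)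
    (hνsupp : ν (Set.Ioc (0 : ℝ) 1)ᶜ = 0)
    (hξpos : ∀ n : ℕ, 1 ≤ n → 0 < ξ n) (hξlt1 : ∀ n : ℕ, 1 ≤ n → ξ n < 1)
    (hξmono : ∀ n : ℕ, 1 ≤ n → ξ n < ξ (n + 1))
    (hmom : ∀ n : ℕ, 1 ≤ n → ∫ s, s ^ n ∂ν = ∏ i ∈ Finset.Icc 1 n, ξ i ^ 2)
    (hint : Integrable (fun s => 1 / s ^ 2) ν)
    (ξe : ℝ) (hξe : ξe = Real.sqrt (∫ s, 1 / s ∂ν)⁻¹)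
    (a b : ℝ) (ha₀ : 0 < a) (hb₀ : 0 < b)
    (ha : a ≤ ξe⁻¹ * Real.sqrt (∫ s, 1 / s ^ 2 ∂ν)⁻¹)
    (hb : b ≤ ξe ^ 2) (hab : 2 * a ^ 2 ≤ b ^ 2 + ξe ^ 2)
    (α β : ℕ × ℕ → ℝ)
    (hα : ∀ i j : ℕ, α (i, j) =
      if j = 0 then (if i = 0 then a else if i = 1 then ξe else ξ (i - 1))
      else if i = 0 then (if j = 1 then b else ξ (j - 1) * b / ξe)
      else ξ i)
    (hβ : ∀ k : ℕ × ℕ, β k = α (k.2, k.1)) :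
    ∀ k : ℕ × ℕ, (sixPointMatrix α β k).PosSemidef :=
  stmt15_general ξ ν hνprob hνsupp hξpos hξlt1 hξmono hmom hint ξe hξe a b hb₀ hb hab α β hα hβ
end

section
/- Let a, b, ξ_e, ξ₁ > 0 with b < ξ_e. Suppose there exists a Borel probability measure μ on [0,∞)² such that ∬ s dμ = a², ∬ t dμ = a², ∬ s t dμ = a²b², ∬ s² dμ = a²ξ_e², ∬ t² dμ = a²ξ_e², ∬ s² t dμ = a²b²ξ₁², ∬ s t² dμ = a²b²ξ₁², and ∬ s² t² dμ = a²b²ξ₁⁴. Then p := ξ_e²ξ₁⁴ + 4a²b²ξ₁² − b²ξ₁⁴ − a²b²ξ_e² − a²b⁴ − 2a²ξ₁⁴ ≥ 0. -/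
open MeasureTheory

set_option maxHeartbeats 1600000 in
theorem combo_integral (μ : Measure (ℝ × ℝ))
    [IsProbabilityMeasure μ]
    (i10 : Integrable (fun p : ℝ × ℝ => p.1) μ)
    (i01 : Integrable (fun p : ℝ × ℝ => p.2) μ)
    (i11 : Integrable (fun p : ℝ × ℝ => p.1 * p.2) μ)
    (i20 : Integrable (fun p : ℝ × ℝ => p.1 ^ 2) μ)
    (i02 : Integrable (fun p : ℝ × ℝ => p.2 ^ 2) μ)
    (i21 : Integrable (fun p : ℝ × ℝ => p.1 ^ 2 * p.2) μ)
    (i12 : Integrable (fun p : ℝ × ℝ => p.1 * p.2 ^ 2) μ)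
    (i22 : Integrable (fun p : ℝ × ℝ => p.1 ^ 2 * p.2 ^ 2) μ)
    (c0 c1 c2 c3 c4 c5 c6 c7 c8 : ℝ) :
    ∫ p, (c0 + (c1 * p.1 + (c2 * p.2 + (c3 * (p.1 * p.2) +
      (c4 * p.1 ^ 2 + (c5 * p.2 ^ 2 + (c6 * (p.1 ^ 2 * p.2) +
      (c7 * (p.1 * p.2 ^ 2) + c8 * (p.1 ^ 2 * p.2 ^ 2))))))))) ∂μ
    = c0 + (c1 * (∫ p, p.1 ∂μ) + (c2 * (∫ p, p.2 ∂μ) + (c3 * (∫ p, p.1 * p.2 ∂μ) +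
      (c4 * (∫ p, p.1 ^ 2 ∂μ) + (c5 * (∫ p, p.2 ^ 2 ∂μ) + (c6 * (∫ p, p.1 ^ 2 * p.2 ∂μ) +
      (c7 * (∫ p, p.1 * p.2 ^ 2 ∂μ) + c8 * (∫ p, p.1 ^ 2 * p.2 ^ 2 ∂μ)))))))) := by
  have J1 := i10.const_mul c1
  have J2 := i01.const_mul c2
  have J3 := i11.const_mul c3
  have J4 := i20.const_mul c4
  have J5 := i02.const_mul c5
  have J6 := i21.const_mul c6
  have J7 := i12.const_mul c7
  have J8 := i22.const_mul c8
  have e8 := integral_add (μ := μ) (f := fun p : ℝ × ℝ => c7 * (p.1 * p.2 ^ 2))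
    (g := fun p : ℝ × ℝ => c8 * (p.1 ^ 2 * p.2 ^ 2)) J7 J8
  have e7 := integral_add (μ := μ) (f := fun p : ℝ × ℝ => c6 * (p.1 ^ 2 * p.2))
    (g := fun p : ℝ × ℝ => c7 * (p.1 * p.2 ^ 2) + c8 * (p.1 ^ 2 * p.2 ^ 2)) J6 (J7.add J8)
  have e6 := integral_add (μ := μ) (f := fun p : ℝ × ℝ => c5 * p.2 ^ 2)
    (g := fun p : ℝ × ℝ => c6 * (p.1 ^ 2 * p.2) + (c7 * (p.1 * p.2 ^ 2) + c8 * (p.1 ^ 2 * p.2 ^ 2)))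
    J5 (J6.add (J7.add J8))
  have e5 := integral_add (μ := μ) (f := fun p : ℝ × ℝ => c4 * p.1 ^ 2)
    (g := fun p : ℝ × ℝ => c5 * p.2 ^ 2 + (c6 * (p.1 ^ 2 * p.2) + (c7 * (p.1 * p.2 ^ 2) + c8 * (p.1 ^ 2 * p.2 ^ 2))))
    J4 (J5.add (J6.add (J7.add J8)))
  have e4 := integral_add (μ := μ) (f := fun p : ℝ × ℝ => c3 * (p.1 * p.2))
    (g := fun p : ℝ × ℝ => c4 * p.1 ^ 2 + (c5 * p.2 ^ 2 + (c6 * (p.1 ^ 2 * p.2) + (c7 * (p.1 * p.2 ^ 2) + c8 * (p.1 ^ 2 * p.2 ^ 2)))))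
    J3 (J4.add (J5.add (J6.add (J7.add J8))))
  have e3 := integral_add (μ := μ) (f := fun p : ℝ × ℝ => c2 * p.2)
    (g := fun p : ℝ × ℝ => c3 * (p.1 * p.2) + (c4 * p.1 ^ 2 + (c5 * p.2 ^ 2 + (c6 * (p.1 ^ 2 * p.2) + (c7 * (p.1 * p.2 ^ 2) + c8 * (p.1 ^ 2 * p.2 ^ 2))))))
    J2 (J3.add (J4.add (J5.add (J6.add (J7.add J8)))))
  have e2 := integral_add (μ := μ) (f := fun p : ℝ × ℝ => c1 * p.1)
    (g := fun p : ℝ × ℝ => c2 * p.2 + (c3 * (p.1 * p.2) + (c4 * p.1 ^ 2 + (c5 * p.2 ^ 2 + (c6 * (p.1 ^ 2 * p.2) + (c7 * (p.1 * p.2 ^ 2) + c8 * (p.1 ^ 2 * p.2 ^ 2)))))))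
    J1 (J2.add (J3.add (J4.add (J5.add (J6.add (J7.add J8))))))
  have e1 := integral_add (μ := μ) (f := fun _ : ℝ × ℝ => c0)
    (g := fun p : ℝ × ℝ => c1 * p.1 + (c2 * p.2 + (c3 * (p.1 * p.2) + (c4 * p.1 ^ 2 + (c5 * p.2 ^ 2 + (c6 * (p.1 ^ 2 * p.2) + (c7 * (p.1 * p.2 ^ 2) + c8 * (p.1 ^ 2 * p.2 ^ 2))))))))
    (integrable_const c0) (J1.add (J2.add (J3.add (J4.add (J5.add (J6.add (J7.add J8)))))))
  rw [e1, e2, e3, e4, e5, e6, e7, e8]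
  simp [integral_const_mul, integral_const]

set_option maxHeartbeats 1600000 in
/-- Necessary condition `p ≥ 0` for subnormality of the third family of
2-variable weighted shifts, via the moments of a representing measure. -/
theorem stmt16 (a b ξe ξ₁ : ℝ)
    (ha : 0 < a) (hb : 0 < b) (hξe : 0 < ξe) (hξ₁ : 0 < ξ₁) (hbξe : b < ξe)
    (μ : Measure (ℝ × ℝ)) (hprob : IsProbabilityMeasure μ)
    (hsupp : μ (Set.Ici (0 : ℝ) ×ˢ Set.Ici (0 : ℝ))ᶜ = 0)
    (m10 : ∫ p, p.1 ∂μ = a ^ 2)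
    (m01 : ∫ p, p.2 ∂μ = a ^ 2)
    (m11 : ∫ p, p.1 * p.2 ∂μ = a ^ 2 * b ^ 2)
    (m20 : ∫ p, p.1 ^ 2 ∂μ = a ^ 2 * ξe ^ 2)
    (m02 : ∫ p, p.2 ^ 2 ∂μ = a ^ 2 * ξe ^ 2)
    (m21 : ∫ p, p.1 ^ 2 * p.2 ∂μ = a ^ 2 * b ^ 2 * ξ₁ ^ 2)
    (m12 : ∫ p, p.1 * p.2 ^ 2 ∂μ = a ^ 2 * b ^ 2 * ξ₁ ^ 2)
    (m22 : ∫ p, p.1 ^ 2 * p.2 ^ 2 ∂μ = a ^ 2 * b ^ 2 * ξ₁ ^ 4) :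
    0 ≤ ξe ^ 2 * ξ₁ ^ 4 + 4 * a ^ 2 * b ^ 2 * ξ₁ ^ 2 - b ^ 2 * ξ₁ ^ 4 -
      a ^ 2 * b ^ 2 * ξe ^ 2 - a ^ 2 * b ^ 4 - 2 * a ^ 2 * ξ₁ ^ 4 := by
  -- integrability of the monomials, from the nonzero values of their integrals
  have i10 : Integrable (fun p : ℝ × ℝ => p.1) μ := by
    by_contra hI; rw [integral_undef hI] at m10
    exact absurd m10.symm (by positivity : (0:ℝ) < a ^ 2).ne'
  have i01 : Integrable (fun p : ℝ × ℝ => p.2) μ := by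
    by_contra hI; rw [integral_undef hI] at m01
    exact absurd m01.symm (by positivity : (0:ℝ) < a ^ 2).ne'
  have i11 : Integrable (fun p : ℝ × ℝ => p.1 * p.2) μ := by
    by_contra hI; rw [integral_undef hI] at m11
    exact absurd m11.symm (by positivity : (0:ℝ) < a ^ 2 * b ^ 2).ne'
  have i20 : Integrable (fun p : ℝ × ℝ => p.1 ^ 2) μ := by
    by_contra hI; rw [integral_undef hI] at m20
    exact absurd m20.symm (by positivity : (0:ℝ) < a ^ 2 * ξe ^ 2).ne'
  have i02 : Integrable (fun p : ℝ × ℝ => p.2 ^ 2) μ := by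
    by_contra hI; rw [integral_undef hI] at m02
    exact absurd m02.symm (by positivity : (0:ℝ) < a ^ 2 * ξe ^ 2).ne'
  have i21 : Integrable (fun p : ℝ × ℝ => p.1 ^ 2 * p.2) μ := by
    by_contra hI; rw [integral_undef hI] at m21
    exact absurd m21.symm (by positivity : (0:ℝ) < a ^ 2 * b ^ 2 * ξ₁ ^ 2).ne'
  have i12 : Integrable (fun p : ℝ × ℝ => p.1 * p.2 ^ 2) μ := by
    by_contra hI; rw [integral_undef hI] at m12
    exact absurd m12.symm (by positivity : (0:ℝ) < a ^ 2 * b ^ 2 * ξ₁ ^ 2).ne'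
  have i22 : Integrable (fun p : ℝ × ℝ => p.1 ^ 2 * p.2 ^ 2) μ := by
    by_contra hI; rw [integral_undef hI] at m22
    exact absurd m22.symm (by positivity : (0:ℝ) < a ^ 2 * b ^ 2 * ξ₁ ^ 4).ne'
  -- the integral of (s + t - 2a²)²
  have hfun1 : (fun q : ℝ × ℝ => (q.1 + q.2 - 2 * a ^ 2) ^ 2)
      = (fun q : ℝ × ℝ => 4 * a ^ 4 + ((-(4 * a ^ 2)) * q.1 + ((-(4 * a ^ 2)) * q.2 +
        (2 * (q.1 * q.2) + (1 * q.1 ^ 2 + (1 * q.2 ^ 2 + (0 * (q.1 ^ 2 * q.2) +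
        (0 * (q.1 * q.2 ^ 2) + 0 * (q.1 ^ 2 * q.2 ^ 2))))))))) :=
    funext fun q => by ring
  have hsq : ∫ q, (q.1 + q.2 - 2 * a ^ 2) ^ 2 ∂μ = 2 * a ^ 2 * (ξe ^ 2 + b ^ 2 - 2 * a ^ 2) := by
    rw [hfun1, combo_integral μ i10 i01 i11 i20 i02 i21 i12 i22,
      m10, m01, m11, m20, m02, m21, m12, m22]
    ring
  have hDnn : 0 ≤ ξe ^ 2 + b ^ 2 - 2 * a ^ 2 := by
    have h1 : 0 ≤ ∫ q, (q.1 + q.2 - 2 * a ^ 2) ^ 2 ∂μ :=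
      integral_nonneg fun q => sq_nonneg _
    rw [hsq] at h1
    nlinarith [sq_nonneg a]
  obtain hD | hD := hDnn.eq_or_lt
  · -- boundary case : s + t = 2a² a.e., so ξ₁² = a² and p = 0
    have hint : Integrable (fun q : ℝ × ℝ => (q.1 + q.2 - 2 * a ^ 2) ^ 2) μ := by
      rw [hfun1]
      exact (integrable_const _).add ((i10.const_mul _).add ((i01.const_mul _).add
        ((i11.const_mul _).add ((i20.const_mul _).add ((i02.const_mul _).add
        ((i21.const_mul _).add ((i12.const_mul _).add (i22.const_mul _))))))))
    have hzero : ∫ q, (q.1 + q.2 - 2 * a ^ 2) ^ 2 ∂μ = 0 := by rw [hsq, ← hD]; ring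
    have haeq : (fun q : ℝ × ℝ => (q.1 + q.2 - 2 * a ^ 2) ^ 2) =ᵐ[μ] 0 :=
      (integral_eq_zero_iff_of_nonneg (fun q => sq_nonneg _) hint).mp hzero
    have haeq2 : (fun q : ℝ × ℝ => q.1 * q.2 * (q.1 + q.2 - 2 * a ^ 2)) =ᵐ[μ] 0 := by
      filter_upwards [haeq] with q hq
      have h0 : q.1 + q.2 - 2 * a ^ 2 = 0 := by
        have : (q.1 + q.2 - 2 * a ^ 2) ^ 2 = 0 := hq
        exact pow_eq_zero_iff (two_ne_zero) |>.mp this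
      simp [h0]
    have hzero2 : ∫ q, q.1 * q.2 * (q.1 + q.2 - 2 * a ^ 2) ∂μ = 0 := by
      rw [integral_congr_ae haeq2]; simp
    have hfun2 : (fun q : ℝ × ℝ => q.1 * q.2 * (q.1 + q.2 - 2 * a ^ 2))
        = (fun q : ℝ × ℝ => 0 + ((0:ℝ) * q.1 + ((0:ℝ) * q.2 + ((-(2 * a ^ 2)) * (q.1 * q.2) +
          ((0:ℝ) * q.1 ^ 2 + ((0:ℝ) * q.2 ^ 2 + (1 * (q.1 ^ 2 * q.2) +
          (1 * (q.1 * q.2 ^ 2) + (0:ℝ) * (q.1 ^ 2 * q.2 ^ 2))))))))) :=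
      funext fun q => by ring
    have hval : ∫ q, q.1 * q.2 * (q.1 + q.2 - 2 * a ^ 2) ∂μ
        = 2 * a ^ 2 * b ^ 2 * (ξ₁ ^ 2 - a ^ 2) := by
      rw [hfun2, combo_integral μ i10 i01 i11 i20 i02 i21 i12 i22,
        m10, m01, m11, m20, m02, m21, m12, m22]
      ring
    have hfac : (2 * a ^ 2 * b ^ 2) * (ξ₁ ^ 2 - a ^ 2) = 0 := by
      rw [hzero2] at hval; linarith [hval]
    have hx : ξ₁ ^ 2 = a ^ 2 := by
      rcases mul_eq_zero.mp hfac with h | h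
      · exact absurd h (by positivity : (0:ℝ) < 2 * a ^ 2 * b ^ 2).ne'
      · linarith
    have hp : ξe ^ 2 * ξ₁ ^ 4 + 4 * a ^ 2 * b ^ 2 * ξ₁ ^ 2 - b ^ 2 * ξ₁ ^ 4 -
        a ^ 2 * b ^ 2 * ξe ^ 2 - a ^ 2 * b ^ 4 - 2 * a ^ 2 * ξ₁ ^ 4 = 0 := by
      linear_combination ((ξe ^ 2 - b ^ 2 - 2 * a ^ 2) * (ξ₁ ^ 2 + a ^ 2) + 4 * a ^ 2 * b ^ 2) * hx
        - (a ^ 2 * (a ^ 2 - b ^ 2)) * hD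
    linarith
  · -- main case : use the extremal quadratic polynomial
    have hfun3 : (fun q : ℝ × ℝ =>
        (a ^ 2 * b ^ 2 * (2 * ξ₁ ^ 2 - ξe ^ 2 - b ^ 2) + b ^ 2 * (a ^ 2 - ξ₁ ^ 2) * q.1
          + b ^ 2 * (a ^ 2 - ξ₁ ^ 2) * q.2 + (ξe ^ 2 + b ^ 2 - 2 * a ^ 2) * (q.1 * q.2)) ^ 2)
        = (fun q : ℝ × ℝ =>
          (a ^ 2 * b ^ 2 * (2 * ξ₁ ^ 2 - ξe ^ 2 - b ^ 2)) ^ 2 +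
          ((2 * (a ^ 2 * b ^ 2 * (2 * ξ₁ ^ 2 - ξe ^ 2 - b ^ 2)) * (b ^ 2 * (a ^ 2 - ξ₁ ^ 2))) * q.1 +
          ((2 * (a ^ 2 * b ^ 2 * (2 * ξ₁ ^ 2 - ξe ^ 2 - b ^ 2)) * (b ^ 2 * (a ^ 2 - ξ₁ ^ 2))) * q.2 +
          ((2 * (a ^ 2 * b ^ 2 * (2 * ξ₁ ^ 2 - ξe ^ 2 - b ^ 2)) * (ξe ^ 2 + b ^ 2 - 2 * a ^ 2)
            + 2 * (b ^ 2 * (a ^ 2 - ξ₁ ^ 2)) ^ 2) * (q.1 * q.2) +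
          ((b ^ 2 * (a ^ 2 - ξ₁ ^ 2)) ^ 2 * q.1 ^ 2 +
          ((b ^ 2 * (a ^ 2 - ξ₁ ^ 2)) ^ 2 * q.2 ^ 2 +
          ((2 * (b ^ 2 * (a ^ 2 - ξ₁ ^ 2)) * (ξe ^ 2 + b ^ 2 - 2 * a ^ 2)) * (q.1 ^ 2 * q.2) +
          ((2 * (b ^ 2 * (a ^ 2 - ξ₁ ^ 2)) * (ξe ^ 2 + b ^ 2 - 2 * a ^ 2)) * (q.1 * q.2 ^ 2) +
          (ξe ^ 2 + b ^ 2 - 2 * a ^ 2) ^ 2 * (q.1 ^ 2 * q.2 ^ 2))))))))) :=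
      funext fun q => by ring
    have hg : ∫ q, (a ^ 2 * b ^ 2 * (2 * ξ₁ ^ 2 - ξe ^ 2 - b ^ 2) + b ^ 2 * (a ^ 2 - ξ₁ ^ 2) * q.1
          + b ^ 2 * (a ^ 2 - ξ₁ ^ 2) * q.2 + (ξe ^ 2 + b ^ 2 - 2 * a ^ 2) * (q.1 * q.2)) ^ 2 ∂μ
        = a ^ 2 * b ^ 2 * (ξe ^ 2 + b ^ 2 - 2 * a ^ 2) *
          (ξe ^ 2 * ξ₁ ^ 4 + 4 * a ^ 2 * b ^ 2 * ξ₁ ^ 2 - b ^ 2 * ξ₁ ^ 4 -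
            a ^ 2 * b ^ 2 * ξe ^ 2 - a ^ 2 * b ^ 4 - 2 * a ^ 2 * ξ₁ ^ 4) := by
      rw [hfun3, combo_integral μ i10 i01 i11 i20 i02 i21 i12 i22,
        m10, m01, m11, m20, m02, m21, m12, m22]
      ring
    have hnn : 0 ≤ a ^ 2 * b ^ 2 * (ξe ^ 2 + b ^ 2 - 2 * a ^ 2) *
        (ξe ^ 2 * ξ₁ ^ 4 + 4 * a ^ 2 * b ^ 2 * ξ₁ ^ 2 - b ^ 2 * ξ₁ ^ 4 -
          a ^ 2 * b ^ 2 * ξe ^ 2 - a ^ 2 * b ^ 4 - 2 * a ^ 2 * ξ₁ ^ 4) := by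
      rw [← hg]; exact integral_nonneg fun q => sq_nonneg _
    have hK : 0 < a ^ 2 * b ^ 2 * (ξe ^ 2 + b ^ 2 - 2 * a ^ 2) := by positivity
    nlinarith [hnn, hK]
end

section
/- Let ν be a Borel probability measure on [0,1] with γ_n := ∫ s^n dν(s) > 0 for all n ≥ 0, and let 0 < y ≤ 1. Define weights α(n,0) := √(γ_{n+1}/γ_n) for n ≥ 0, α(n,j) := 1 for n ≥ 0 and j ≥ 1; β(0,0) := y, β(n,0) := y/√(γ_n) for n ≥ 1, β(n,j) := 1 for n ≥ 0 and j ≥ 1. If the six-point-test matrix M(k) is positive semidefinite for every k ∈ ℤ₊², then y² ≤ ν({1}) and there exists a Borel probability measure μ on [0,1]² such that ∬ s^i dμ(s,t) = γ_i for all i ≥ 0 and ∬ s^i t^j dμ(s,t) = y² for all i ≥ 0 and j ≥ 1. -/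
/-!
The lower diagonal entry of the Six-point matrix at `(n, 0)` is `1 - y² / γₙ`, so joint
hyponormality forces `y² ≤ γₙ` for every `n`. Since `ν` lives on `[0,1]`, dominated convergence gives
`γₙ → ν({1})`, whence `y² ≤ ν({1})`. This leaves room to lift mass `y²` of the atom of `ν` at
`1` from the point `(1,0)` of `[0,1]²` to `(1,1)`: the resulting measure
`ν ⊗ δ₀ - y² δ₍₁,₀₎ + y² δ₍₁,₁₎` has the required moments, because `s^i t^j` vanishes on the
`s`-axis for `j ≥ 1`.
-/

open MeasureTheory

open Filter Topology
open scoped NNReal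

theorem sq_le_sq_of_sixPointMatrix_posSemidef {α β : ℕ × ℕ → ℝ} {k : ℕ × ℕ}
    (h : (sixPointMatrix α β k).PosSemidef) : β k ^ 2 ≤ β (k.1, k.2 + 1) ^ 2 := by
  have h11 := h.diag_nonneg (i := 1)
  simp only [sixPointMatrix, Matrix.of_apply, Matrix.cons_val', Matrix.cons_val_one,
    Matrix.cons_val_fin_one] at h11
  linarith

section MomentsOnUnitInterval

variable {ν : Measure ℝ}

theorem ae_norm_pow_le_one (hν : ν (Set.Icc 0 1)ᶜ = 0) (n : ℕ) : ∀ᵐ s ∂ν, ‖s ^ n‖ ≤ 1 := by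
  filter_upwards [ae_iff.2 hν] with s hs
  rw [norm_pow, Real.norm_of_nonneg hs.1]
  exact pow_le_one₀ hs.1 hs.2

theorem integrable_pow_of_measure_compl_Icc_eq_zero [IsFiniteMeasure ν]
    (hν : ν (Set.Icc 0 1)ᶜ = 0) (n : ℕ) : Integrable (fun s : ℝ => s ^ n) ν :=
  (integrable_const 1).mono' (measurable_id.pow_const n).aestronglyMeasurable
    (ae_norm_pow_le_one hν n)

theorem tendsto_pow_indicator_one {s : ℝ} (hs : s ∈ Set.Icc (0 : ℝ) 1) :
    Tendsto (fun n : ℕ => s ^ n) atTop (𝓝 (({1} : Set ℝ).indicator 1 s)) := by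
  rcases hs.2.eq_or_lt with rfl | hlt
  · simp
  · rw [Set.indicator_of_notMem (Set.mem_singleton_iff.not.2 hlt.ne)]
    exact tendsto_pow_atTop_nhds_zero_of_lt_one hs.1 hlt

theorem tendsto_integral_pow_measureReal_one [IsFiniteMeasure ν] (hν : ν (Set.Icc 0 1)ᶜ = 0) :
    Tendsto (fun n : ℕ => ∫ s, s ^ n ∂ν) atTop (𝓝 (ν.real {1})) := by
  rw [← integral_indicator_one (measurableSet_singleton 1)]
  exact tendsto_integral_of_dominated_convergence (fun _ => 1)
    (fun n => (measurable_id.pow_const n).aestronglyMeasurable) (integrable_const 1)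
    (ae_norm_pow_le_one hν) ((ae_iff.2 hν).mono fun _ => tendsto_pow_indicator_one)

end MomentsOnUnitInterval

section AtomRemoval

variable {X : Type*} [MeasurableSpace X] [MeasurableSingletonClass X] {μ : Measure X}
  {c : ℝ≥0} {a : X}

theorem integral_sub_smul_dirac (hc : c • Measure.dirac a ≤ μ) {h : X → ℝ} (hh : Integrable h μ) :
    ∫ x, h x ∂(μ - c • Measure.dirac a) = ∫ x, h x ∂μ - c * h a := by
  have hsplit : ∫ x, h x ∂(μ - c • Measure.dirac a + c • Measure.dirac a) =
      ∫ x, h x ∂(μ - c • Measure.dirac a) + ∫ x, h x ∂(c • Measure.dirac a) :=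
    integral_add_measure (hh.mono_measure Measure.sub_le)
      ((integrable_dirac enorm_lt_top).smul_measure_nnreal)
  rw [Measure.sub_add_cancel_of_le hc, integral_smul_nnreal_measure, integral_dirac] at hsplit
  rw [hsplit, NNReal.smul_def, smul_eq_mul]
  ring

theorem smul_dirac_le_iff : c • Measure.dirac a ≤ μ ↔ (c : ENNReal) ≤ μ {a} := by
  refine ⟨fun h => ?_, fun h => Measure.le_iff.2 fun s hs => ?_⟩
  · simpa using h {a}
  · rw [Measure.smul_apply, Measure.dirac_apply' a hs, ENNReal.smul_def, smul_eq_mul]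
    by_cases ha : a ∈ s
    · simpa [ha] using h.trans (measure_mono (Set.singleton_subset_iff.2 ha))
    · simp [ha]

end AtomRemoval

noncomputable def liftAtomAtOne (ν : Measure ℝ) (c : ℝ≥0) : Measure (ℝ × ℝ) :=
  (ν - c • Measure.dirac 1).map (fun s => (s, 0)) + c • Measure.dirac (1, 1)

section LiftAtomAtOne

variable {ν : Measure ℝ} {c : ℝ≥0}

theorem isProbabilityMeasure_liftAtomAtOne [IsProbabilityMeasure ν]
    (hc : c • Measure.dirac 1 ≤ ν) : IsProbabilityMeasure (liftAtomAtOne ν c) := by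
  constructor
  have hmass := congrArg (· Set.univ) (Measure.sub_add_cancel_of_le hc)
  simp only [Measure.add_apply, measure_univ] at hmass
  rw [liftAtomAtOne, Measure.add_apply, Measure.map_apply measurable_prodMk_right .univ]
  simpa using hmass

theorem liftAtomAtOne_compl_Icc_prod_Icc (hν : ν (Set.Icc 0 1)ᶜ = 0) :
    liftAtomAtOne ν c (Set.Icc 0 1 ×ˢ Set.Icc 0 1)ᶜ = 0 := by
  have hQ : MeasurableSet (Set.Icc (0 : ℝ) 1 ×ˢ Set.Icc (0 : ℝ) 1) :=
    measurableSet_Icc.prod measurableSet_Icc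
  rw [liftAtomAtOne, Measure.add_apply, Measure.map_apply measurable_prodMk_right hQ.compl,
    Measure.smul_apply, Measure.dirac_apply' _ hQ.compl, Set.indicator_of_notMem (by simp),
    smul_zero, add_zero]
  refine measure_mono_null (fun s hs => ?_) (Measure.absolutelyContinuous_of_le Measure.sub_le hν)
  simpa using hs

theorem integral_liftAtomAtOne [IsFiniteMeasure ν] (hc : c • Measure.dirac 1 ≤ ν)
    {g : ℝ × ℝ → ℝ} (hg : Measurable g) (hint : Integrable (fun s => g (s, 0)) ν) :
    ∫ p, g p ∂liftAtomAtOne ν c = ∫ s, g (s, 0) ∂ν - c * g (1, 0) + c * g (1, 1) := by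
  have hint' : Integrable g ((ν - c • Measure.dirac 1).map fun s => (s, 0)) :=
    (integrable_map_measure hg.aestronglyMeasurable measurable_prodMk_right.aemeasurable).2
      (hint.mono_measure Measure.sub_le)
  rw [liftAtomAtOne, integral_add_measure hint' (integrable_dirac enorm_lt_top).smul_measure_nnreal,
    integral_map measurable_prodMk_right.aemeasurable hg.aestronglyMeasurable,
    integral_sub_smul_dirac hc hint, integral_smul_nnreal_measure, integral_dirac, NNReal.smul_def,
    smul_eq_mul]

end LiftAtomAtOne

theorem stmt19_general (ν : Measure ℝ) (hνprob : IsProbabilityMeasure ν)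
    (hνsupp : ν (Set.Icc (0 : ℝ) 1)ᶜ = 0)
    (γ : ℕ → ℝ) (hγ : ∀ n : ℕ, γ n = ∫ s, s ^ n ∂ν) (hγpos : ∀ n : ℕ, 0 < γ n)
    (y : ℝ)
    (α β : ℕ × ℕ → ℝ)
    (hβ : ∀ n j : ℕ, β (n, j) = if j = 0 then y / Real.sqrt (γ n) else 1)
    (hhyp : ∀ k : ℕ × ℕ, (sixPointMatrix α β k).PosSemidef) :
    ENNReal.ofReal (y ^ 2) ≤ ν {1} ∧
    ∃ μ : Measure (ℝ × ℝ), IsProbabilityMeasure μ ∧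
      μ (Set.Icc (0 : ℝ) 1 ×ˢ Set.Icc (0 : ℝ) 1)ᶜ = 0 ∧
      (∀ i : ℕ, ∫ p, p.1 ^ i ∂μ = γ i) ∧
      (∀ i j : ℕ, 1 ≤ j → ∫ p, p.1 ^ i * p.2 ^ j ∂μ = y ^ 2) := by
  have hy_le_γ (n : ℕ) : y ^ 2 ≤ γ n := by
    have h := sq_le_sq_of_sixPointMatrix_posSemidef (hhyp (n, 0))
    simp only [hβ, zero_add, one_ne_zero, ↓reduceIte, one_pow, div_pow,
      Real.sq_sqrt (hγpos n).le] at h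
    exact (div_le_one (hγpos n)).1 h
  have hatom : ENNReal.ofReal (y ^ 2) ≤ ν {1} := ENNReal.ofReal_le_of_le_toReal <|
    ge_of_tendsto' (tendsto_integral_pow_measureReal_one hνsupp) fun n => hγ n ▸ hy_le_γ n
  have hc : (y ^ 2).toNNReal • Measure.dirac 1 ≤ ν := smul_dirac_le_iff.2 hatom
  have hcy : ((y ^ 2).toNNReal : ℝ) = y ^ 2 := Real.coe_toNNReal _ (sq_nonneg y)
  refine ⟨hatom, liftAtomAtOne ν (y ^ 2).toNNReal, isProbabilityMeasure_liftAtomAtOne hc,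
    liftAtomAtOne_compl_Icc_prod_Icc hνsupp, fun i => ?_, fun i j hj => ?_⟩
  · rw [integral_liftAtomAtOne hc (measurable_fst.pow_const i)
      (integrable_pow_of_measure_compl_Icc_eq_zero hνsupp i)]
    simp [hγ, hcy]
  · have hj0 : (0 : ℝ) ^ j = 0 := zero_pow (Nat.one_le_iff_ne_zero.1 hj)
    rw [integral_liftAtomAtOne (g := fun p => p.1 ^ i * p.2 ^ j) hc (by fun_prop) (by simp [hj0])]
    simp [hj0, hcy]

/-- For the 2-variable weighted shift of Figure 6, joint hyponormality implies
`y² ≤ ν({1})` and subnormality (existence of an interpolating Berger measure). -/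
theorem stmt19 (ν : Measure ℝ) (hνprob : IsProbabilityMeasure ν)
    (hνsupp : ν (Set.Icc (0 : ℝ) 1)ᶜ = 0)
    (γ : ℕ → ℝ) (hγ : ∀ n : ℕ, γ n = ∫ s, s ^ n ∂ν) (hγpos : ∀ n : ℕ, 0 < γ n)
    (y : ℝ) (hy₀ : 0 < y) (hy₁ : y ≤ 1)
    (α β : ℕ × ℕ → ℝ)
    (hα : ∀ n j : ℕ, α (n, j) = if j = 0 then Real.sqrt (γ (n + 1) / γ n) else 1)
    (hβ : ∀ n j : ℕ, β (n, j) = if j = 0 then y / Real.sqrt (γ n) else 1)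
    (hhyp : ∀ k : ℕ × ℕ, (sixPointMatrix α β k).PosSemidef) :
    ENNReal.ofReal (y ^ 2) ≤ ν {1} ∧
    ∃ μ : Measure (ℝ × ℝ), IsProbabilityMeasure μ ∧
      μ (Set.Icc (0 : ℝ) 1 ×ˢ Set.Icc (0 : ℝ) 1)ᶜ = 0 ∧
      (∀ i : ℕ, ∫ p, p.1 ^ i ∂μ = γ i) ∧
      (∀ i j : ℕ, 1 ≤ j → ∫ p, p.1 ^ i * p.2 ^ j ∂μ = y ^ 2) :=
  stmt19_general ν hνprob hνsupp γ hγ hγpos y α β hβ hhyp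
end
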